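/- arXiv:2004.13196 — 8 statements merged into one kernel-verified Lean document; each statement's English description precedes it below -/
import Mathlib

section
/- For every integer n ≥ 3 and every integer k ≥ 1, the k-th moment of distance satisfies I(n,k) = (2n/π) · ∫_0^{π/n} sec²(θ₁) · ( ∫_{θ₁}^{π/2} u^k · cos(u) · sin(u) du ) dθ₁. -/
/-!
The inner `η`-integral does not depend on `θ₂` and is even in `θ₁`, so the triple integral
reduces to `4 (π / n)` times its integral over `0 ≤ θ₁ ≤ π / n`. For fixed `θ₁` the spherical
law of cosines suggests the substitution `cos u = cos θ₁ * cos η`; it is carried out without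
singularities as `x = cos η`, then `x ↦ cos θ₁ * x`, then `x = cos u`, and produces the factor
`sec² θ₁`.
-/

open MeasureTheory

/-- The `k`-th moment of distance on the homogeneous lens space `L(n;1)`,
expressed as an explicit integral over a fundamental domain in join coordinates. -/
noncomputable def momentI (n k : ℕ) : ℝ :=
  ((n : ℝ) ^ 2 / (2 * Real.pi ^ 2)) *
    ∫ θ₂ in (-(Real.pi / n))..(Real.pi / n),
      ∫ θ₁ in (-(Real.pi / n))..(Real.pi / n),
        ∫ η in (0 : ℝ)..(Real.pi / 2),
          (Real.arccos (Real.cos θ₁ * Real.cos η)) ^ k * Real.cos η * Real.sin η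

open Real Set

theorem intervalIntegral.integral_neg_to_eq_two_smul_of_even {E : Type*} [NormedAddCommGroup E]
    [NormedSpace ℝ E] {f : ℝ → E} (hf : ∀ x, f (-x) = f x) {a : ℝ}
    (hfi : IntervalIntegrable f volume 0 a) :
    ∫ x in -a..a, f x = (2 : ℝ) • ∫ x in 0..a, f x := by
  have hfi' : IntervalIntegrable f volume (-a) 0 := by
    simpa [hf] using (IntervalIntegrable.iff_comp_neg (f := f)).1 hfi.symm
  have hleft : ∫ x in -a..0, f x = ∫ x in 0..a, f x := by
    simpa [hf] using (intervalIntegral.integral_comp_neg (a := 0) (b := a) f).symm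
  rw [← intervalIntegral.integral_add_adjacent_intervals hfi' hfi, hleft, two_smul]

theorem integral_comp_cos_mul_sin {F : ℝ → ℝ} (hF : Continuous F) (a b : ℝ) :
    ∫ u in a..b, F (cos u) * sin u = ∫ x in cos b..cos a, F x := by
  have h := intervalIntegral.integral_comp_mul_deriv (a := a) (b := b) (f := cos)
    (f' := fun u => -sin u) (fun u _ => hasDerivAt_cos u) continuous_sin.neg.continuousOn hF
  simp only [Function.comp_def, mul_neg, intervalIntegral.integral_neg] at h
  rw [intervalIntegral.integral_symm (cos a), ← h, neg_neg]

theorem integral_comp_arccos_cos_mul_cos {g : ℝ → ℝ} (hg : Continuous g) {t : ℝ}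
    (ht₀ : 0 ≤ t) (htπ : t ≤ π) (hct : cos t ≠ 0) :
    ∫ η in 0..π / 2, g (arccos (cos t * cos η)) * cos η * sin η =
      (cos t ^ 2)⁻¹ * ∫ u in t..π / 2, g u * cos u * sin u := by
  set c := cos t
  have hcont : Continuous fun x => g (arccos x) * x := by fun_prop
  calc ∫ η in 0..π / 2, g (arccos (c * cos η)) * cos η * sin η
      = ∫ x in 0..1, g (arccos (c * x)) * x := by
        simpa [mul_assoc] using
          integral_comp_cos_mul_sin (F := fun x => g (arccos (c * x)) * x) (by fun_prop) 0 (π / 2)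
    _ = c⁻¹ * ∫ x in 0..1, g (arccos (c * x)) * (c * x) := by
        rw [← intervalIntegral.integral_const_mul]
        refine intervalIntegral.integral_congr fun x _ => ?_
        field_simp
    _ = (c ^ 2)⁻¹ * ∫ x in 0..c, g (arccos x) * x := by
        rw [intervalIntegral.integral_comp_mul_left (fun x => g (arccos x) * x) hct, smul_eq_mul,
          mul_zero, mul_one, ← mul_assoc, ← mul_inv, sq]
    _ = (c ^ 2)⁻¹ * ∫ u in t..π / 2, g (arccos (cos u)) * cos u * sin u := by
        rw [integral_comp_cos_mul_sin hcont, cos_pi_div_two]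
    _ = (c ^ 2)⁻¹ * ∫ u in t..π / 2, g u * cos u * sin u := by
        congr 1
        refine intervalIntegral.integral_congr fun u hu => ?_
        have hu' : u ∈ Icc 0 π :=
          uIcc_subset_Icc ⟨ht₀, htπ⟩ ⟨by positivity, by linarith [pi_pos]⟩ hu
        simp only [arccos_cos hu'.1 hu'.2]

theorem moment_eq_double_integral_general (n k : ℕ) (hn : 3 ≤ n) :
    momentI n k =
      (2 * n / Real.pi) *
        ∫ θ₁ in (0 : ℝ)..(Real.pi / n),
          (1 / (Real.cos θ₁) ^ 2) *
            ∫ u in θ₁..(Real.pi / 2), u ^ k * Real.cos u * Real.sin u := by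
  set φ : ℝ → ℝ := fun θ => ∫ η in 0..π / 2, arccos (cos θ * cos η) ^ k * cos η * sin η
  have hφ_even : ∀ θ, φ (-θ) = φ θ := fun θ => by simp only [φ, cos_neg]
  have hφ_cont : Continuous φ :=
    intervalIntegral.continuous_parametric_intervalIntegral_of_continuous' (by fun_prop) _ _
  have hφ_eq : ∀ θ ∈ uIcc 0 (π / n),
      φ θ = 1 / cos θ ^ 2 * ∫ u in θ..π / 2, u ^ k * cos u * sin u := by
    intro θ hθ
    rw [uIcc_of_le (by positivity)] at hθ
    have hθ_lt : θ < π / 2 := hθ.2.trans_lt <| div_lt_div_of_pos_left pi_pos two_pos <| by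
      exact_mod_cast (show 2 < n by omega)
    rw [one_div]
    exact integral_comp_arccos_cos_mul_cos (continuous_pow k) hθ.1 (by linarith [pi_pos])
      (cos_pos_of_mem_Ioo ⟨by linarith [pi_pos, hθ.1], hθ_lt⟩).ne'
  unfold momentI
  rw [intervalIntegral.integral_const, smul_eq_mul,
    intervalIntegral.integral_neg_to_eq_two_smul_of_even hφ_even (hφ_cont.intervalIntegrable _ _),
    smul_eq_mul, intervalIntegral.integral_congr hφ_eq]
  field_simp
  ring

theorem moment_eq_double_integral (n k : ℕ) (hn : 3 ≤ n) (hk : 1 ≤ k) :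
    momentI n k =
      (2 * n / Real.pi) *
        ∫ θ₁ in (0 : ℝ)..(Real.pi / n),
          (1 / (Real.cos θ₁) ^ 2) *
            ∫ u in θ₁..(Real.pi / 2), u ^ k * Real.cos u * Real.sin u :=
  moment_eq_double_integral_general n k hn
end

section
/- For every integer n ≥ 3, the first moment of distance is I(n,1) = π/(2n) + ((n−2)/4) · tan(π/n). -/
/-!
Substituting `u = cos η`, the `η`-integral becomes `∫₀¹ u · arccos (u cos θ₁) du`, which has an
elementary primitive. For `0 ≤ θ < π / 2` its value is `θ / 2 + ((π / 2 - θ) / cos² θ - tan θ) / 4`,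
the derivative of `θ² / 4 + (π / 2 - θ) tan θ / 4`. Since `n ≥ 3` gives `π / n < π / 2`, evenness
in `θ₁` makes the `θ₁`-integral twice this primitive at `π / n`, and the `θ₂`-integral only
contributes the length `2π / n`.
-/

open MeasureTheory Real

theorem intervalIntegral.integral_symmetric_of_even {E : Type*} [NormedAddCommGroup E]
    [NormedSpace ℝ E] {f : ℝ → E} (hf : ∀ x, f (-x) = f x) {a : ℝ}
    (hint : IntervalIntegrable f volume 0 a) :
    ∫ x in -a..a, f x = (2 : ℝ) • ∫ x in 0..a, f x := by
  have hint' : IntervalIntegrable f volume (-a) 0 := by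
    simpa [hf] using ((IntervalIntegrable.iff_comp_neg).mp hint).symm
  have hleft : ∫ x in -a..0, f x = ∫ x in 0..a, f x := by
    simpa [hf] using (intervalIntegral.integral_comp_neg (a := 0) (b := a) f).symm
  rw [← intervalIntegral.integral_add_adjacent_intervals hint' hint, hleft, two_smul]

noncomputable def arccosMulPrimitive (c u : ℝ) : ℝ :=
  u ^ 2 / 2 * arccos (c * u) + (arcsin (c * u) - c * u * √(1 - (c * u) ^ 2)) / (4 * c ^ 2)

theorem continuous_arccosMulPrimitive (c : ℝ) : Continuous (arccosMulPrimitive c) := by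
  have := continuous_arccos
  have := continuous_arcsin
  unfold arccosMulPrimitive
  fun_prop

theorem hasDerivAt_arccosMulPrimitive {c u : ℝ} (hc : c ≠ 0) (h₁ : -1 < c * u) (h₂ : c * u < 1) :
    HasDerivAt (arccosMulPrimitive c) (u * arccos (c * u)) u := by
  have hs : 0 < 1 - (c * u) ^ 2 := by nlinarith
  have hs0 : √(1 - (c * u) ^ 2) ≠ 0 := (sqrt_pos.mpr hs).ne'
  have hssq : √(1 - (c * u) ^ 2) ^ 2 = 1 - (c * u) ^ 2 := sq_sqrt hs.le
  have hlin : HasDerivAt (fun u : ℝ => c * u) c u := by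
    simpa using (hasDerivAt_id u).const_mul c
  have harccos := (hasDerivAt_arccos h₁.ne' h₂.ne).comp u hlin
  have harcsin := (hasDerivAt_arcsin h₁.ne' h₂.ne).comp u hlin
  have hsqrt := (hasDerivAt_sqrt hs.ne').comp u ((hlin.pow 2).const_sub 1)
  have hsq : HasDerivAt (fun u : ℝ => u ^ 2 / 2) u u := by
    simpa using (hasDerivAt_pow 2 u).div_const 2
  refine ((hsq.mul harccos).add
    ((harcsin.sub (hlin.mul hsqrt)).div_const (4 * c ^ 2))).congr_deriv ?_
  simp only [Function.comp_apply, Pi.pow_apply, Nat.cast_ofNat]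
  generalize √(1 - (c * u) ^ 2) = s at hs0 hssq ⊢
  field_simp
  linear_combination (-2) * hssq

theorem integral_arccos_mul_cos_mul_cos_mul_sin {c : ℝ} (hc₀ : c ≠ 0) (hc : |c| ≤ 1) :
    ∫ η in (0 : ℝ)..π / 2, arccos (c * cos η) * cos η * sin η = arccosMulPrimitive c 1 := by
  have hderiv : ∀ η ∈ Set.Ioo 0 (π / 2), HasDerivAt (fun η => -arccosMulPrimitive c (cos η))
      (arccos (c * cos η) * cos η * sin η) η := by
    intro η hη
    have hcos₀ : 0 < cos η := cos_pos_of_mem_Ioo ⟨by linarith [hη.1, pi_pos], hη.2⟩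
    have hcos₁ : cos η < 1 := by
      simpa using cos_lt_cos_of_nonneg_of_le_pi le_rfl (by linarith [hη.2, pi_pos]) hη.1
    have hlt : |c * cos η| < 1 := by
      rw [abs_mul, abs_of_pos hcos₀]
      nlinarith [abs_nonneg c]
    obtain ⟨h₁, h₂⟩ := abs_lt.mp hlt
    refine ((hasDerivAt_arccosMulPrimitive hc₀ h₁ h₂).comp η (hasDerivAt_cos η)).neg.congr_deriv ?_
    ring
  have hint : IntervalIntegrable (fun η => arccos (c * cos η) * cos η * sin η) volume 0 (π / 2) := by
    have := continuous_arccos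
    exact Continuous.intervalIntegrable (by fun_prop) _ _
  rw [intervalIntegral.integral_eq_sub_of_hasDerivAt_of_le (by positivity)
    ((continuous_arccosMulPrimitive c).comp continuous_cos).neg.continuousOn hderiv hint]
  simp [arccosMulPrimitive]

noncomputable def etaIntegral (θ : ℝ) : ℝ :=
  ∫ η in (0 : ℝ)..π / 2, arccos (cos θ * cos η) * cos η * sin η

theorem etaIntegral_neg (θ : ℝ) : etaIntegral (-θ) = etaIntegral θ := by
  simp only [etaIntegral, cos_neg]

theorem continuous_etaIntegral : Continuous etaIntegral := by
  have := continuous_arccos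
  exact intervalIntegral.continuous_parametric_intervalIntegral_of_continuous'
    (by fun_prop) _ _

theorem etaIntegral_eq {θ : ℝ} (h₀ : 0 ≤ θ) (h : θ < π / 2) :
    etaIntegral θ = θ / 2 + ((π / 2 - θ) / cos θ ^ 2 - tan θ) / 4 := by
  have hcos : 0 < cos θ := cos_pos_of_mem_Ioo ⟨by linarith [pi_pos], h⟩
  have hsin : √(1 - cos θ ^ 2) = sin θ := by
    rw [← sin_sq, sqrt_sq (sin_nonneg_of_nonneg_of_le_pi h₀ (by linarith [pi_pos]))]
  rw [etaIntegral, integral_arccos_mul_cos_mul_cos_mul_sin hcos.ne'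
    (abs_le.mpr ⟨neg_one_le_cos θ, cos_le_one θ⟩), arccosMulPrimitive, mul_one,
    arcsin_eq_pi_div_two_sub_arccos, arccos_cos h₀ (by linarith [pi_pos]), hsin, tan_eq_sin_div_cos]
  field_simp

theorem hasDerivAt_etaIntegral_primitive {θ : ℝ} (h : cos θ ≠ 0) :
    HasDerivAt (fun t => t ^ 2 / 4 + (π / 2 - t) * tan t / 4)
      (θ / 2 + ((π / 2 - θ) / cos θ ^ 2 - tan θ) / 4) θ := by
  have hsq : HasDerivAt (fun t : ℝ => t ^ 2 / 4) (θ / 2) θ := by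
    refine ((hasDerivAt_pow 2 θ).div_const 4).congr_deriv ?_
    norm_num
    ring
  refine (hsq.add ((((hasDerivAt_id θ).const_sub (π / 2)).mul
    (hasDerivAt_tan h)).div_const 4)).congr_deriv ?_
  simp only [id]
  ring

theorem integral_etaIntegral {a : ℝ} (h₀ : 0 ≤ a) (h : a < π / 2) :
    ∫ θ in (0 : ℝ)..a, etaIntegral θ = a ^ 2 / 4 + (π / 2 - a) * tan a / 4 := by
  have hderiv : ∀ θ ∈ Set.uIcc 0 a, HasDerivAt (fun t => t ^ 2 / 4 + (π / 2 - t) * tan t / 4)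
      (etaIntegral θ) θ := by
    intro θ hθ
    rw [Set.uIcc_of_le h₀] at hθ
    rw [etaIntegral_eq hθ.1 (hθ.2.trans_lt h)]
    exact hasDerivAt_etaIntegral_primitive (cos_pos_of_mem_Ioo ⟨by linarith [pi_pos, hθ.1],
      hθ.2.trans_lt h⟩).ne'
  rw [intervalIntegral.integral_eq_sub_of_hasDerivAt hderiv
    (continuous_etaIntegral.intervalIntegrable _ _)]
  simp

theorem first_moment (n : ℕ) (hn : 3 ≤ n) :
    momentI n 1 = Real.pi / (2 * n) + ((n : ℝ) - 2) / 4 * Real.tan (Real.pi / n) := by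
  have ha : π / n < π / 2 :=
    div_lt_div_of_pos_left pi_pos two_pos (by exact_mod_cast (by omega : 2 < n))
  have hinner : ∫ θ in -(π / n)..π / n, etaIntegral θ =
      2 * ((π / n) ^ 2 / 4 + (π / 2 - π / n) * tan (π / n) / 4) := by
    rw [intervalIntegral.integral_symmetric_of_even etaIntegral_neg
      (continuous_etaIntegral.intervalIntegrable _ _), smul_eq_mul,
      integral_etaIntegral (by positivity) ha]
  have hmoment : momentI n 1 =
      n ^ 2 / (2 * π ^ 2) * ∫ _ in -(π / n)..π / n, ∫ θ in -(π / n)..π / n, etaIntegral θ := by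
    simp only [momentI, etaIntegral, pow_one]
  rw [hmoment, hinner, intervalIntegral.integral_const, smul_eq_mul]
  field_simp
  ring
end

section
/- For every integer n ≥ 3 and every integer k ≥ 2, the moments of distance satisfy the recurrence I(n,k) = −(k(k−1)/4) · I(n,k−2) + (1/(k+1)) · (π/n)^k + (n/(2π)) · ((π/2)^k − (π/n)^k) · tan(π/n). -/
open MeasureTheory

/-!
Write `J_k(θ) = ∫₀^{π/2} arccos (cos θ cos η)^k cos η sin η dη` for the innermost integral.
The substitutions `u = cos η` and `cos θ · u = cos t` give, for `0 ≤ θ < π/2`,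
`J_k(θ) = sec² θ ∫_θ^{π/2} t^k sin t cos t dt`. Integrating by parts twice,
`J_{m+2} + (m+2)(m+1)/4 · J_m = sec² θ · ((π/2)^{m+2}/4 - A_m(θ))` with `A_m` elementary, and
this has the elementary antiderivative `momentPrimitive m`, built from `tan θ`. Integrating
over `θ ∈ [0, π/n] ⊂ [0, π/2)` (the integrand is even in `θ₁` and does not depend on `θ₂`)
gives the recurrence.
-/

open Real intervalIntegral Set

theorem intervalIntegral.integral_neg_self_eq_two_mul_of_even {f : ℝ → ℝ} {a : ℝ}
    (hf : IntervalIntegrable f volume 0 a) (heven : ∀ x, f (-x) = f x) :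
    ∫ x in -a..a, f x = 2 * ∫ x in 0..a, f x := by
  have hneg : ∫ x in -a..0, f x = ∫ x in 0..a, f x := by
    simpa [heven] using (integral_comp_neg (a := 0) (b := a) f).symm
  have hf' : IntervalIntegrable f volume (-a) 0 := by
    simpa [heven] using ((IntervalIntegrable.iff_comp_neg (f := f)).1 hf).symm
  rw [← integral_add_adjacent_intervals hf' hf, hneg, two_mul]

theorem integral_comp_cos_mul_sin_s2 {g : ℝ → ℝ} (hg : Continuous g) :
    ∫ η in 0..π / 2, g (cos η) * sin η = ∫ u in 0..1, g u := by
  have := integral_comp_mul_deriv (a := π / 2) (b := 0) (fun x _ => hasDerivAt_cos x)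
    (by fun_prop) hg
  simp only [cos_zero, cos_pi_div_two, Function.comp_def] at this
  rw [integral_symm, ← this, ← intervalIntegral.integral_neg]
  simp

noncomputable def joinIntegral (k : ℕ) (θ : ℝ) : ℝ :=
  ∫ η in 0..π / 2, arccos (cos θ * cos η) ^ k * cos η * sin η

theorem continuous_joinIntegral (k : ℕ) : Continuous (joinIntegral k) := by
  have := continuous_arccos
  exact continuous_parametric_intervalIntegral_of_continuous' (by fun_prop) _ _

theorem joinIntegral_neg (k : ℕ) (θ : ℝ) : joinIntegral k (-θ) = joinIntegral k θ := by
  simp [joinIntegral]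

theorem momentI_eq_integral_joinIntegral (n k : ℕ) :
    momentI n k = 2 * n / π * ∫ θ in 0..π / n, joinIntegral k θ := by
  have heven := integral_neg_self_eq_two_mul_of_even
    ((continuous_joinIntegral k).intervalIntegrable 0 (π / n)) (joinIntegral_neg k)
  have hmoment : momentI n k = n ^ 2 / (2 * π ^ 2) *
      ∫ _ in -(π / n)..π / n, ∫ θ in -(π / n)..π / n, joinIntegral k θ := rfl
  rw [hmoment, intervalIntegral.integral_const, heven, smul_eq_mul]
  field_simp
  ring

theorem joinIntegral_eq (k : ℕ) {θ : ℝ} (h0 : 0 ≤ θ) (hπ2 : θ < π / 2) :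
    joinIntegral k θ = (cos θ)⁻¹ ^ 2 * ∫ t in θ..π / 2, t ^ k * sin t * cos t := by
  have hc : 0 < cos θ := cos_pos_of_mem_Ioo ⟨by linarith, hπ2⟩
  have hu : joinIntegral k θ = ∫ u in 0..1, arccos (cos θ * u) ^ k * u := by
    rw [← integral_comp_cos_mul_sin_s2 (by have := continuous_arccos; fun_prop)]
    simp only [joinIntegral, mul_assoc]
  have ht := integral_comp_mul_deriv (a := π / 2) (b := θ)
    (fun t _ => (hasDerivAt_cos t).div_const (cos θ)) (by fun_prop)
    (g := fun u => arccos (cos θ * u) ^ k * u) (by have := continuous_arccos; fun_prop)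
  simp only [cos_pi_div_two, zero_div, div_self hc.ne', Function.comp_def] at ht
  rw [hu, ← ht, integral_symm, ← intervalIntegral.integral_const_mul,
    ← intervalIntegral.integral_neg]
  refine integral_congr fun t ht => ?_
  rw [uIcc_of_le hπ2.le] at ht
  rw [mul_div_cancel₀ _ hc.ne', arccos_cos (by linarith [ht.1]) (by linarith [ht.2, pi_pos])]
  field_simp

noncomputable def powSinCosPrimitive (m : ℕ) (t : ℝ) : ℝ :=
  -(t ^ (m + 2) * cos (2 * t)) / 4 + (m + 2) * t ^ (m + 1) * sin (2 * t) / 8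

theorem hasDerivAt_powSinCosPrimitive (m : ℕ) (t : ℝ) :
    HasDerivAt (powSinCosPrimitive m)
      (t ^ (m + 2) * sin t * cos t + (m + 2) * (m + 1) / 4 * (t ^ m * sin t * cos t)) t := by
  have h2t : HasDerivAt (fun t : ℝ => 2 * t) 2 t := by
    simpa using (hasDerivAt_id t).const_mul 2
  have hp2 : HasDerivAt (fun t : ℝ => t ^ (m + 2)) ((m + 2) * t ^ (m + 1)) t := by
    simpa using hasDerivAt_pow (m + 2) t
  have hp1 : HasDerivAt (fun t : ℝ => t ^ (m + 1)) ((m + 1) * t ^ m) t := by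
    simpa using hasDerivAt_pow (m + 1) t
  have := ((hp2.mul ((hasDerivAt_cos _).comp t h2t)).neg.div_const 4).add
    (((hp1.mul ((hasDerivAt_sin _).comp t h2t)).const_mul ((m : ℝ) + 2)).div_const 8)
  refine (this.congr_deriv ?_).congr_of_eventuallyEq (.of_forall fun x => ?_)
  · simp only [Function.comp_apply, sin_two_mul]
    ring
  · simp only [powSinCosPrimitive, Pi.add_apply, Pi.mul_apply, Pi.neg_apply, Function.comp_apply]
    ring

theorem integral_pow_mul_sin_mul_cos_add (m : ℕ) (θ : ℝ) :
    ∫ t in θ..π / 2, (t ^ (m + 2) * sin t * cos t + (m + 2) * (m + 1) / 4 * (t ^ m * sin t * cos t))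
      = (π / 2) ^ (m + 2) / 4 - powSinCosPrimitive m θ := by
  have hend : powSinCosPrimitive m (π / 2) = (π / 2) ^ (m + 2) / 4 := by
    simp [powSinCosPrimitive, mul_div_cancel₀ π two_ne_zero]
  rw [← hend]
  exact integral_eq_sub_of_hasDerivAt (fun t _ => hasDerivAt_powSinCosPrimitive m t)
    (Continuous.intervalIntegrable (by fun_prop) _ _)

theorem joinIntegral_add_eq (m : ℕ) {θ : ℝ} (h0 : 0 ≤ θ) (hπ2 : θ < π / 2) :
    joinIntegral (m + 2) θ + (m + 2) * (m + 1) / 4 * joinIntegral m θ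
      = (cos θ)⁻¹ ^ 2 * ((π / 2) ^ (m + 2) / 4 - powSinCosPrimitive m θ) := by
  rw [joinIntegral_eq _ h0 hπ2, joinIntegral_eq _ h0 hπ2, ← integral_pow_mul_sin_mul_cos_add,
    intervalIntegral.integral_add (Continuous.intervalIntegrable (by fun_prop) _ _)
      (Continuous.intervalIntegrable (by fun_prop) _ _),
    intervalIntegral.integral_const_mul]
  ring

noncomputable def momentPrimitive (m : ℕ) (θ : ℝ) : ℝ :=
  (π / 2) ^ (m + 2) * tan θ / 4 + θ ^ (m + 3) / (2 * (m + 3)) - θ ^ (m + 2) * tan θ / 4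

theorem hasDerivAt_momentPrimitive (m : ℕ) {θ : ℝ} (hc : cos θ ≠ 0) :
    HasDerivAt (momentPrimitive m)
      ((cos θ)⁻¹ ^ 2 * ((π / 2) ^ (m + 2) / 4 - powSinCosPrimitive m θ)) θ := by
  have htan : HasDerivAt tan (1 / cos θ ^ 2) θ := hasDerivAt_tan hc
  have hp3 : HasDerivAt (fun t : ℝ => t ^ (m + 3)) ((m + 3) * θ ^ (m + 2)) θ := by
    simpa using hasDerivAt_pow (m + 3) θ
  have hp2 : HasDerivAt (fun t : ℝ => t ^ (m + 2)) ((m + 2) * θ ^ (m + 1)) θ := by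
    simpa using hasDerivAt_pow (m + 2) θ
  have := (((htan.const_mul ((π / 2) ^ (m + 2))).div_const 4).add
    (hp3.div_const (2 * ((m : ℝ) + 3)))).sub ((hp2.mul htan).div_const 4)
  refine this.congr_deriv ?_
  rw [powSinCosPrimitive, cos_two_mul, sin_two_mul, tan_eq_sin_div_cos]
  field_simp
  ring

theorem integral_joinIntegral_add (m : ℕ) {a : ℝ} (h0 : 0 ≤ a) (hπ2 : a < π / 2) :
    (∫ θ in 0..a, joinIntegral (m + 2) θ) + (m + 2) * (m + 1) / 4 * ∫ θ in 0..a, joinIntegral m θ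
      = momentPrimitive m a := by
  have hcos : ∀ θ ∈ uIcc 0 a, cos θ ≠ 0 := by
    intro θ hθ
    rw [uIcc_of_le h0] at hθ
    exact (cos_pos_of_mem_Ioo ⟨by linarith [hθ.1], by linarith [hθ.2]⟩).ne'
  have hderiv_int : IntervalIntegrable
      (fun θ => (cos θ)⁻¹ ^ 2 * ((π / 2) ^ (m + 2) / 4 - powSinCosPrimitive m θ)) volume 0 a :=
    ContinuousOn.intervalIntegrable (((continuous_cos.continuousOn.inv₀ hcos).pow 2).mul
      (by unfold powSinCosPrimitive; fun_prop))
  have hzero : momentPrimitive m 0 = 0 := by simp [momentPrimitive]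
  have hsum : ∫ θ in 0..a, (joinIntegral (m + 2) θ + (m + 2) * (m + 1) / 4 * joinIntegral m θ)
      = momentPrimitive m a - momentPrimitive m 0 := by
    rw [← integral_eq_sub_of_hasDerivAt
      (fun θ hθ => hasDerivAt_momentPrimitive m (hcos θ hθ)) hderiv_int]
    refine integral_congr fun θ hθ => ?_
    rw [uIcc_of_le h0] at hθ
    exact joinIntegral_add_eq m hθ.1 (by linarith [hθ.2])
  rwa [intervalIntegral.integral_add ((continuous_joinIntegral _).intervalIntegrable _ _)
    (((continuous_joinIntegral m).intervalIntegrable _ _).const_mul _),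
    intervalIntegral.integral_const_mul, hzero, sub_zero] at hsum

theorem moment_recurrence (n k : ℕ) (hn : 3 ≤ n) (hk : 2 ≤ k) :
    momentI n k =
      -((k : ℝ) * ((k : ℝ) - 1) / 4) * momentI n (k - 2)
        + (1 / ((k : ℝ) + 1)) * (Real.pi / n) ^ k
        + ((n : ℝ) / (2 * Real.pi)) * ((Real.pi / 2) ^ k - (Real.pi / n) ^ k)
            * Real.tan (Real.pi / n) := by
  obtain ⟨m, rfl⟩ : ∃ m, k = m + 2 := ⟨k - 2, by omega⟩
  have hn3 : (3 : ℝ) ≤ n := by exact_mod_cast hn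
  have hn0 : (n : ℝ) ≠ 0 := by positivity
  have hpos : 0 < π / n := by positivity
  have hlt : π / n < π / 2 := div_lt_div_of_pos_left pi_pos two_pos (by linarith)
  rw [Nat.add_sub_cancel, momentI_eq_integral_joinIntegral, momentI_eq_integral_joinIntegral,
    eq_sub_of_add_eq (integral_joinIntegral_add m hpos.le hlt), momentPrimitive]
  have hcancel : (n : ℝ) * (π / n) = π := mul_div_cancel₀ π hn0
  generalize π / n = a at hcancel hpos ⊢
  rw [← hcancel]
  have ha0 : a ≠ 0 := hpos.ne'
  push_cast
  field_simp
  ring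
end

section
/- For every integer n ≥ 3 and every integer m ≥ 0, the even moments of distance are given by the finite sum I(n,2m) = (−1)^m · ((2m)!/2^{2m}) · ( 1 + ∑_{j=0}^{m−1} ((−1)^{j+1}/(2j+3)!) · (2π/n)^{2j+2} + (n/(2π)) · tan(π/n) · ∑_{j=0}^{m−1} ((−1)^{j+1}/(2j+2)!) · ( π^{2j+2} − (2π/n)^{2j+2} ) ). -/
/-!
The substitution `x = 2 arccos (cos θ cos η)` turns the innermost integral into
`(∫ x in 2|θ|..π, x ^ 2m sin x) / (4 ^ (m + 1) cos² θ)`, and `x ^ 2m sin x` has an explicit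
primitive built from the Taylor polynomials of `cos` and `sin`. Integrating over
`θ ∈ [-π/n, π/n]` by parts against `tan θ`, the identity `tan θ sin 2θ = 1 - cos 2θ` leaves only
polynomial-times-trigonometric terms, which again have a closed-form primitive. The outer
integral over `θ₂` contributes the factor `2π/n`.
-/

open MeasureTheory

open Real Finset
open scoped Nat

noncomputable def cosTaylor (N : ℕ) (x : ℝ) : ℝ :=
  ∑ j ∈ range N, (-1) ^ j * x ^ (2 * j) / (2 * j)!

noncomputable def sinTaylor (N : ℕ) (x : ℝ) : ℝ :=
  ∑ j ∈ range N, (-1) ^ j * x ^ (2 * j + 1) / (2 * j + 1)!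

lemma hasDerivAt_sinTaylor (N : ℕ) (x : ℝ) : HasDerivAt (sinTaylor N) (cosTaylor N x) x := by
  have := HasDerivAt.fun_sum (u := range N) (x := x) fun j _ =>
    ((hasDerivAt_pow (2 * j + 1) x).const_mul ((-1 : ℝ) ^ j)).div_const ((2 * j + 1)! : ℝ)
  refine this.congr_deriv (sum_congr rfl fun j _ => ?_)
  rw [Nat.factorial_succ]
  push_cast
  field_simp

lemma hasDerivAt_cosTaylor_succ (N : ℕ) (x : ℝ) :
    HasDerivAt (cosTaylor (N + 1)) (-sinTaylor N x) x := by
  have := HasDerivAt.fun_sum (u := range (N + 1)) (x := x) fun j _ =>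
    ((hasDerivAt_pow (2 * j) x).const_mul ((-1 : ℝ) ^ j)).div_const ((2 * j)! : ℝ)
  refine this.congr_deriv ?_
  rw [sum_range_succ', sinTaylor, ← sum_neg_distrib]
  simp only [mul_zero, Nat.cast_zero, zero_mul, add_zero, zero_div]
  refine sum_congr rfl fun j _ => ?_
  rw [show 2 * (j + 1) = 2 * j + 1 + 1 by ring, Nat.factorial_succ]
  push_cast
  field_simp
  ring

lemma cosTaylor_neg (N : ℕ) (x : ℝ) : cosTaylor N (-x) = cosTaylor N x := by
  simp only [cosTaylor, (even_two_mul _).neg_pow]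

lemma sinTaylor_neg (N : ℕ) (x : ℝ) : sinTaylor N (-x) = -sinTaylor N x := by
  simp only [sinTaylor, (odd_two_mul_add_one _).neg_pow, ← sum_neg_distrib, mul_neg, neg_div]

lemma cosTaylor_succ_sub_cosTaylor_succ (m : ℕ) (x y : ℝ) :
    cosTaylor (m + 1) x - cosTaylor (m + 1) y =
      ∑ j ∈ range m, ((-1 : ℝ) ^ (j + 1) / (2 * j + 2)!) * (x ^ (2 * j + 2) - y ^ (2 * j + 2)) := by
  simp only [cosTaylor, sum_range_succ', mul_zero, pow_zero]
  rw [add_sub_add_right_eq_sub, ← sum_sub_distrib]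
  refine sum_congr rfl fun j _ => ?_
  rw [show 2 * (j + 1) = 2 * j + 2 by ring]
  ring

lemma sinTaylor_succ (m : ℕ) (x : ℝ) :
    sinTaylor (m + 1) x =
      x * (1 + ∑ j ∈ range m, ((-1 : ℝ) ^ (j + 1) / (2 * j + 3)!) * x ^ (2 * j + 2)) := by
  rw [sinTaylor, sum_range_succ', mul_add, mul_sum]
  simp only [mul_zero, zero_add, pow_zero, pow_one, Nat.factorial_one, Nat.cast_one, one_mul,
    div_one, mul_one]
  rw [add_comm]
  refine congrArg (x + ·) (sum_congr rfl fun j _ => ?_)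
  rw [show 2 * (j + 1) + 1 = 2 * j + 3 by ring]
  ring

noncomputable def powSinPrimitive (m : ℕ) (x : ℝ) : ℝ :=
  (-1) ^ (m + 1) * (2 * m)! * (cos x * cosTaylor (m + 1) x + sin x * sinTaylor m x)

lemma hasDerivAt_powSinPrimitive (m : ℕ) (x : ℝ) :
    HasDerivAt (powSinPrimitive m) (x ^ (2 * m) * sin x) x := by
  have h := (((hasDerivAt_cos x).mul (hasDerivAt_cosTaylor_succ m x)).add
    ((hasDerivAt_sin x).mul (hasDerivAt_sinTaylor m x))).const_mul ((-1 : ℝ) ^ (m + 1) * (2 * m)!)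
  refine h.congr_deriv ?_
  have hsucc : cosTaylor (m + 1) x = cosTaylor m x + (-1) ^ m * x ^ (2 * m) / (2 * m)! :=
    sum_range_succ _ _
  have hsq : ((-1 : ℝ) ^ m) ^ 2 = 1 := by rw [← pow_mul, mul_comm, pow_mul, neg_one_sq, one_pow]
  rw [hsucc]
  field_simp
  linear_combination (x ^ (2 * m) * sin x) * hsq

lemma continuous_powSinPrimitive (m : ℕ) : Continuous (powSinPrimitive m) :=
  continuous_iff_continuousAt.2 fun x => (hasDerivAt_powSinPrimitive m x).continuousAt

lemma powSinPrimitive_neg (m : ℕ) (x : ℝ) : powSinPrimitive m (-x) = powSinPrimitive m x := by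
  simp only [powSinPrimitive, cos_neg, sin_neg, cosTaylor_neg, sinTaylor_neg, neg_mul_neg]

lemma powSinPrimitive_pi (m : ℕ) :
    powSinPrimitive m π = (-1) ^ m * (2 * m)! * cosTaylor (m + 1) π := by
  rw [powSinPrimitive, cos_pi, sin_pi, pow_succ]
  ring

lemma hasDerivAt_powSinPrimitive_two_mul_arccos (m : ℕ) {c η : ℝ} (h₁ : -1 < c * cos η)
    (h₂ : c * cos η < 1) :
    HasDerivAt (fun η => powSinPrimitive m (2 * arccos (c * cos η)))
      (2 ^ (2 * m + 2) * c ^ 2 * (arccos (c * cos η) ^ (2 * m) * cos η * sin η)) η := by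
  have h := (hasDerivAt_powSinPrimitive m _).comp η
    ((((hasDerivAt_arccos h₁.ne' h₂.ne).comp η ((hasDerivAt_cos η).const_mul c))).const_mul 2)
  refine h.congr_deriv ?_
  -- `sin (2 arccos u) = 2 u √(1 - u²)` cancels the `√(1 - u²)` coming from `arccos'`.
  have hs : √(1 - c ^ 2 * cos η ^ 2) ≠ 0 := (sqrt_pos.2 (by nlinarith)).ne'
  simp only [Function.comp_apply]
  rw [sin_two_mul, sin_arccos, cos_arccos h₁.le h₂.le]
  field_simp
  ring

lemma integral_arccos_mul_cos_pow_mul_cos_mul_sin (m : ℕ) {c : ℝ} (hc : c ≠ 0) (hc1 : |c| ≤ 1) :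
    ∫ η in (0 : ℝ)..(π / 2), arccos (c * cos η) ^ (2 * m) * cos η * sin η =
      (powSinPrimitive m π - powSinPrimitive m (2 * arccos c)) / c ^ 2 / 2 ^ (2 * m + 2) := by
  have hbound : ∀ η ∈ Set.Ioo 0 (π / 2), |c * cos η| < 1 := fun η ⟨hη₀, hη₁⟩ => by
    have hcos : 0 < cos η := cos_pos_of_mem_Ioo ⟨by linarith [pi_pos], hη₁⟩
    have hcos_lt : cos η < 1 :=
      (cos_lt_cos_of_nonneg_of_le_pi le_rfl (by linarith [pi_pos]) hη₀).trans_eq cos_zero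
    rw [abs_mul, abs_of_pos hcos]
    nlinarith
  have hftc := intervalIntegral.integral_eq_sub_of_hasDerivAt_of_le (by positivity)
    (f := fun η => powSinPrimitive m (2 * arccos (c * cos η)))
    ((continuous_powSinPrimitive m).comp (by fun_prop)).continuousOn
    (fun η hη => hasDerivAt_powSinPrimitive_two_mul_arccos m
      (abs_lt.1 (hbound η hη)).1 (abs_lt.1 (hbound η hη)).2)
    ((show Continuous fun η => 2 ^ (2 * m + 2) * c ^ 2 *
      (arccos (c * cos η) ^ (2 * m) * cos η * sin η) by fun_prop).intervalIntegrable 0 (π / 2))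
  rw [intervalIntegral.integral_const_mul] at hftc
  simp only [cos_pi_div_two, mul_zero, arccos_zero, cos_zero, mul_one,
    mul_div_cancel₀ π two_ne_zero] at hftc
  rw [div_div, eq_div_iff (by positivity), ← hftc]
  ring

noncomputable def lensPrimitive (m : ℕ) (θ : ℝ) : ℝ :=
  (-1) ^ m * (2 * m)! *
    (tan θ * (cosTaylor (m + 1) π - cosTaylor (m + 1) (2 * θ)) + sinTaylor (m + 1) (2 * θ))

lemma hasDerivAt_lensPrimitive (m : ℕ) {θ : ℝ} (hθ : cos θ ≠ 0) :
    HasDerivAt (lensPrimitive m)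
      ((powSinPrimitive m π - powSinPrimitive m (2 * θ)) / cos θ ^ 2) θ := by
  have h2 : HasDerivAt (fun θ : ℝ => 2 * θ) 2 θ := by
    simpa using (hasDerivAt_id θ).const_mul (2 : ℝ)
  have h := (((hasDerivAt_tan hθ).mul (((hasDerivAt_cosTaylor_succ m _).comp θ h2).const_sub
    (cosTaylor (m + 1) π))).add ((hasDerivAt_sinTaylor (m + 1) _).comp θ h2)).const_mul
    ((-1 : ℝ) ^ m * (2 * m)!)
  refine h.congr_deriv ?_
  simp only [Function.comp_apply]
  rw [powSinPrimitive_pi, powSinPrimitive, tan_eq_sin_div_cos, cos_two_mul, sin_two_mul]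
  field_simp
  ring

lemma lensPrimitive_neg (m : ℕ) (θ : ℝ) : lensPrimitive m (-θ) = -lensPrimitive m θ := by
  simp only [lensPrimitive, tan_neg, mul_neg, cosTaylor_neg, sinTaylor_neg]
  ring

lemma integral_integral_arccos_cos_mul_cos (m : ℕ) {a : ℝ} (ha₀ : 0 ≤ a) (ha : a < π / 2) :
    ∫ θ in (-a)..a, ∫ η in (0 : ℝ)..(π / 2),
        arccos (cos θ * cos η) ^ (2 * m) * cos η * sin η =
      lensPrimitive m a / 2 ^ (2 * m + 1) := by
  have habs : ∀ θ ∈ Set.uIcc (-a) a, |θ| < π / 2 := fun θ hθ => by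
    rw [Set.uIcc_of_le (by linarith)] at hθ
    exact abs_lt.2 ⟨by linarith [hθ.1], by linarith [hθ.2]⟩
  have hcos : ∀ θ ∈ Set.uIcc (-a) a, 0 < cos θ := fun θ hθ =>
    cos_pos_of_mem_Ioo (abs_lt.1 (habs θ hθ))
  have hinner : Set.EqOn
      (fun θ => ∫ η in (0 : ℝ)..(π / 2), arccos (cos θ * cos η) ^ (2 * m) * cos η * sin η)
      (fun θ => (powSinPrimitive m π - powSinPrimitive m (2 * θ)) / cos θ ^ 2 / 2 ^ (2 * m + 2))
      (Set.uIcc (-a) a) := fun θ hθ => by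
    have harccos : powSinPrimitive m (2 * arccos (cos θ)) = powSinPrimitive m (2 * θ) := by
      rw [← cos_abs, arccos_cos (abs_nonneg θ) ((habs θ hθ).le.trans (by linarith [pi_pos]))]
      rcases abs_cases θ with ⟨h, _⟩ | ⟨h, _⟩
      · rw [h]
      · rw [h, mul_neg, powSinPrimitive_neg]
    dsimp only
    rw [integral_arccos_mul_cos_pow_mul_cos_mul_sin m (hcos θ hθ).ne'
      ((abs_of_pos (hcos θ hθ)).trans_le (cos_le_one θ)), harccos]
  have hderiv : ∀ θ ∈ Set.uIcc (-a) a, HasDerivAt (lensPrimitive m)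
      ((powSinPrimitive m π - powSinPrimitive m (2 * θ)) / cos θ ^ 2) θ :=
    fun θ hθ => hasDerivAt_lensPrimitive m (hcos θ hθ).ne'
  have hint : IntervalIntegrable
      (fun θ => (powSinPrimitive m π - powSinPrimitive m (2 * θ)) / cos θ ^ 2) volume (-a) a :=
    (ContinuousOn.div ((continuous_const.sub
      ((continuous_powSinPrimitive m).comp (continuous_const_mul 2))).continuousOn)
      (by fun_prop) fun θ hθ => (pow_pos (hcos θ hθ) 2).ne').intervalIntegrable
  rw [intervalIntegral.integral_congr hinner, intervalIntegral.integral_div,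
    intervalIntegral.integral_eq_sub_of_hasDerivAt hderiv hint, lensPrimitive_neg, pow_succ]
  ring

theorem even_moment_finite_sum (n m : ℕ) (hn : 3 ≤ n) :
    momentI n (2 * m) =
      (-1 : ℝ) ^ m * ((2 * m).factorial / 2 ^ (2 * m)) *
        ( 1
          + ∑ j ∈ Finset.range m,
              ((-1 : ℝ) ^ (j + 1) / (2 * j + 3).factorial) * (2 * Real.pi / n) ^ (2 * j + 2)
          + ((n : ℝ) / (2 * Real.pi)) * Real.tan (Real.pi / n) *
              ∑ j ∈ Finset.range m,
                ((-1 : ℝ) ^ (j + 1) / (2 * j + 2).factorial) *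
                  (Real.pi ^ (2 * j + 2) - (2 * Real.pi / n) ^ (2 * j + 2)) ) := by
  have ha : π / n < π / 2 := div_lt_div_of_pos_left pi_pos two_pos (by exact_mod_cast hn)
  rw [momentI, integral_integral_arccos_cos_mul_cos m (by positivity) ha,
    intervalIntegral.integral_const, smul_eq_mul, lensPrimitive,
    cosTaylor_succ_sub_cosTaylor_succ, sinTaylor_succ, mul_div_assoc]
  field_simp
  ring
end

section
/- The first moment of distance on the lens space L(2;1) = ℝP³ is I(2,1) = 1/π + π/4. -/
open MeasureTheory

/-!
Integrate in `η` first: for `c = cos θ₁` the integrand has an elementary primitive, which gives a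
closed form in `θ₁` on `[0, π / 2)`. That closed form in turn has the primitive
`θ ^ 2 / 4 + (π / 2 - θ) * tan θ / 4`, which tends to `π ^ 2 / 16 + 1 / 4` at `π / 2` because
`(π / 2 - θ) * tan θ → 1`. Evenness in `θ₁` doubles this, and the `θ₂`-integral is a factor `π`.
-/

open Real intervalIntegral Set

theorem intervalIntegral.integral_neg_self_eq_two_smul_of_even {E : Type*} [NormedAddCommGroup E]
    [NormedSpace ℝ E] {f : ℝ → E} {a : ℝ} (hf : ∀ x, f (-x) = f x)
    (hint : IntervalIntegrable f volume (-a) a) :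
    ∫ x in -a..a, f x = (2 : ℝ) • ∫ x in 0..a, f x := by
  have hleft : ∫ x in -a..0, f x = ∫ x in 0..a, f x := by
    simpa [hf] using (integral_comp_neg (a := 0) (b := a) f).symm
  have h0 : (0 : ℝ) ∈ uIcc (-a) a := by
    rcases le_total 0 a with h | h
    exacts [mem_uIcc_of_le (by linarith) h, mem_uIcc_of_ge h (by linarith)]
  rw [← integral_add_adjacent_intervals (hint.mono_set (uIcc_subset_uIcc_left h0))
    (hint.mono_set (uIcc_subset_uIcc_right h0)), hleft, two_smul]

theorem Real.sinc_pos {x : ℝ} (hx : |x| < π) : 0 < sinc x := by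
  wlog h0 : 0 ≤ x generalizing x
  · simpa [sinc_neg] using this (x := -x) (by simpa using hx) (by linarith)
  rcases h0.eq_or_lt with rfl | hpos
  · simp
  rw [sinc_of_ne_zero hpos.ne']
  exact div_pos (sin_pos_of_pos_of_lt_pi hpos (by rwa [abs_of_nonneg h0] at hx)) hpos

noncomputable def arccosCosIntegral (c : ℝ) : ℝ :=
  ∫ η in (0 : ℝ)..(π / 2), arccos (c * cos η) * cos η * sin η

theorem continuous_arccosCosIntegral : Continuous arccosCosIntegral :=
  continuous_parametric_intervalIntegral_of_continuous' (by fun_prop) _ _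

theorem hasDerivAt_primitive_arccos_mul_cos_mul_cos_mul_sin {c η : ℝ} (hc : c ≠ 0)
    (h : |c * cos η| < 1) :
    HasDerivAt (fun η => -(cos η ^ 2 / 2 * arccos (c * cos η) + arcsin (c * cos η) / (4 * c ^ 2)
        - cos η * √(1 - (c * cos η) ^ 2) / (4 * c)))
      (arccos (c * cos η) * cos η * sin η) η := by
  obtain ⟨hlo, hhi⟩ := abs_lt.mp h
  have hpos : 0 < 1 - (c * cos η) ^ 2 := by nlinarith
  have hcos := hasDerivAt_cos η
  have hu := hcos.const_mul c
  have hsqrt := (hasDerivAt_sqrt hpos.ne').comp η ((hu.fun_pow 2).const_sub 1)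
  have hD := ((((hcos.fun_pow 2).div_const 2).fun_mul
    ((hasDerivAt_arccos hlo.ne' hhi.ne).comp η hu)).fun_add
    (((hasDerivAt_arcsin hlo.ne' hhi.ne).comp η hu).div_const (4 * c ^ 2))).fun_sub
    ((hcos.fun_mul hsqrt).div_const (4 * c)) |>.fun_neg
  refine hD.congr_deriv ?_
  simp only [Function.comp_apply, Nat.cast_ofNat, pow_one, Nat.add_one_sub_one]
  set s := √(1 - (c * cos η) ^ 2)
  have hs2 : s ^ 2 = 1 - (c * cos η) ^ 2 := sq_sqrt hpos.le
  have hs0 : s ≠ 0 := (sqrt_pos.mpr hpos).ne'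
  field_simp
  linear_combination (-2 * sin η) * hs2

theorem arccosCosIntegral_eq {c : ℝ} (hc : c ≠ 0) (hc1 : |c| ≤ 1) :
    arccosCosIntegral c = arccos c / 2 + arcsin c / (4 * c ^ 2) - √(1 - c ^ 2) / (4 * c) := by
  rw [arccosCosIntegral, integral_eq_sub_of_hasDerivAt_of_le (by positivity) (by fun_prop)
    (fun η hη => hasDerivAt_primitive_arccos_mul_cos_mul_cos_mul_sin hc ?_)
    (Continuous.intervalIntegrable (by fun_prop) _ _)]
  · simp only [cos_pi_div_two, cos_zero, mul_zero, mul_one, arccos_zero, arcsin_zero]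
    ring
  · have h0 : 0 < cos η := cos_pos_of_mem_Ioo ⟨by linarith [hη.1, pi_pos], hη.2⟩
    have h1 : cos η < 1 := by
      simpa using cos_lt_cos_of_nonneg_of_le_pi le_rfl (by linarith [hη.2, pi_pos]) hη.1
    rw [abs_mul, abs_of_pos h0]
    nlinarith [abs_nonneg c]

theorem arccosCosIntegral_cos {θ : ℝ} (h0 : 0 ≤ θ) (h1 : θ < π / 2) :
    arccosCosIntegral (cos θ) = θ / 2 + (π / 2 - θ - sin θ * cos θ) / (4 * cos θ ^ 2) := by
  have hcos : 0 < cos θ := cos_pos_of_mem_Ioo ⟨by linarith, h1⟩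
  have hsin : 0 ≤ sin θ := sin_nonneg_of_nonneg_of_le_pi h0 (by linarith)
  have harcsin : arcsin (cos θ) = π / 2 - θ := by
    rw [← sin_pi_div_two_sub]
    exact arcsin_sin (by linarith) (by linarith)
  rw [arccosCosIntegral_eq hcos.ne' (by rw [abs_of_pos hcos]; exact cos_le_one θ),
    arccos_cos h0 (by linarith), harcsin, ← sin_sq, sqrt_sq hsin]
  field_simp
  ring

/-- `θ ^ 2 / 4 + (π / 2 - θ) * tan θ / 4`, written with `sinc` to be continuous at `π / 2`. -/
noncomputable def arccosCosIntegralPrimitive (θ : ℝ) : ℝ :=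
  θ ^ 2 / 4 + sin θ / (4 * sinc (π / 2 - θ))

theorem continuousOn_arccosCosIntegralPrimitive :
    ContinuousOn arccosCosIntegralPrimitive (Icc 0 (π / 2)) := by
  refine Continuous.continuousOn ?_ |>.add ((continuous_sin.continuousOn).div ?_ fun θ hθ => ?_)
  · fun_prop
  · exact (continuous_const.mul (continuous_sinc.comp (by fun_prop))).continuousOn
  · have hθ' : |π / 2 - θ| < π :=
      abs_lt.mpr ⟨by linarith [hθ.2, pi_pos], by linarith [hθ.1, pi_pos]⟩
    have := sinc_pos hθ'
    positivity

theorem hasDerivAt_arccosCosIntegralPrimitive {θ : ℝ} (h0 : 0 < θ) (h1 : θ < π / 2) :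
    HasDerivAt arccosCosIntegralPrimitive (arccosCosIntegral (cos θ)) θ := by
  have hcos : 0 < cos θ := cos_pos_of_mem_Ioo ⟨by linarith, h1⟩
  have hnear : (fun x => x ^ 2 / 4 + (π / 2 - x) * sin x / (4 * cos x)) =ᶠ[nhds θ]
      arccosCosIntegralPrimitive := by
    filter_upwards [eventually_ne_nhds h1.ne] with x hx
    rw [arccosCosIntegralPrimitive, sinc_of_ne_zero (sub_ne_zero.mpr (Ne.symm hx)),
      sin_pi_div_two_sub]
    rcases eq_or_ne (cos x) 0 with hc | hc
    · simp [hc]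
    · field_simp
  have hD := ((hasDerivAt_pow 2 θ).div_const 4).fun_add
    ((((hasDerivAt_id θ).const_sub (π / 2)).fun_mul (hasDerivAt_sin θ)).fun_div
      ((hasDerivAt_cos θ).const_mul 4) (by positivity))
  refine (hD.congr_of_eventuallyEq hnear.symm).congr_deriv ?_
  rw [arccosCosIntegral_cos h0.le h1]
  simp only [id_eq, Nat.cast_ofNat, pow_one, Nat.add_one_sub_one]
  field_simp
  linear_combination (π - 2 * θ) * sin_sq_add_cos_sq θ

theorem integral_arccosCosIntegral_cos :
    ∫ θ in (0 : ℝ)..(π / 2), arccosCosIntegral (cos θ) = π ^ 2 / 16 + 1 / 4 := by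
  rw [integral_eq_sub_of_hasDerivAt_of_le (by positivity)
    continuousOn_arccosCosIntegralPrimitive
    (fun θ hθ => hasDerivAt_arccosCosIntegralPrimitive hθ.1 hθ.2)
    ((continuous_arccosCosIntegral.comp continuous_cos).intervalIntegrable _ _)]
  simp only [arccosCosIntegralPrimitive, sin_pi_div_two, sin_zero, sub_self, sub_zero,
    sinc_zero]
  ring

theorem first_moment_RP3 : momentI 2 1 = 1 / Real.pi + Real.pi / 4 := by
  have hinner : ∫ θ in -(π / 2)..(π / 2), arccosCosIntegral (cos θ) = π ^ 2 / 8 + 1 / 2 := by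
    have hint : IntervalIntegrable (fun θ => arccosCosIntegral (cos θ)) volume (-(π / 2)) (π / 2) :=
      (continuous_arccosCosIntegral.comp continuous_cos).intervalIntegrable _ _
    rw [integral_neg_self_eq_two_smul_of_even (by simp [cos_neg]) hint,
      integral_arccosCosIntegral_cos, smul_eq_mul]
    ring
  simp only [momentI, Nat.cast_ofNat, pow_one]
  change 2 ^ 2 / (2 * π ^ 2) * ∫ _ in -(π / 2)..(π / 2),
    ∫ θ in -(π / 2)..(π / 2), arccosCosIntegral (cos θ) = _
  rw [hinner, intervalIntegral.integral_const, smul_eq_mul]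
  field_simp
  ring
end

section
/- For every integer k ≥ 2, the moments of distance on L(2;1) = ℝP³ satisfy the recurrence I(2,k) = −(k(k−1)/4) · I(2,k−2) + (1/(k+1)) · (π/2)^k + (k/π) · (π/2)^{k−1}. -/
open MeasureTheory

/-! Let `F k θ` (`fiberMoment`) be the inner `η`-integral. The substitution
`r = arccos (cos θ * cos η)` gives `cos θ ^ 2 * F k θ = ∫ r in θ..π/2, r ^ k * sin r * cos r`
for `0 < θ < π`. Hence `sin θ * cos θ * F k θ = tan θ * ∫ r in θ..π/2, r ^ k * sin r * cos r`
has derivative `F k θ - θ ^ k * sin θ ^ 2` on `(0, π/2)` and vanishes at both ends, so that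
`I(2,k) = 4/π * ∫ r in 0..π/2, r ^ k * sin r ^ 2`. The recurrence for these one-variable
integrals is two integrations by parts, packaged as an explicit antiderivative of
`(r ^ (m+2) + (m+2)(m+1)/4 * r ^ m) * sin r ^ 2`. -/

open Real Set intervalIntegral

theorem integral_neg_eq_two_mul_integral_of_even {f : ℝ → ℝ} (hf : Function.Even f)
    (hc : Continuous f) (a : ℝ) : ∫ x in -a..a, f x = 2 * ∫ x in 0..a, f x := by
  have hneg : ∫ x in -a..0, f x = ∫ x in 0..a, f x := by
    simpa [hf _] using (integral_comp_neg (a := 0) (b := a) f).symm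
  rw [← integral_add_adjacent_intervals (hc.intervalIntegrable _ 0) (hc.intervalIntegrable _ _),
    hneg, two_mul]

theorem abs_cos_lt_one_of_mem_Ioo {θ : ℝ} (hθ : θ ∈ Ioo 0 π) : |cos θ| < 1 := by
  have h1 := cos_lt_cos_of_nonneg_of_le_pi le_rfl hθ.2.le hθ.1
  have h2 := cos_lt_cos_of_nonneg_of_le_pi hθ.1.le le_rfl hθ.2
  rw [cos_zero] at h1
  rw [cos_pi] at h2
  exact abs_lt.mpr ⟨h2, h1⟩

theorem abs_mul_cos_lt_one {c : ℝ} (hc : |c| < 1) (η : ℝ) : |c * cos η| < 1 := by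
  rw [abs_mul]
  exact (mul_le_of_le_one_right (abs_nonneg c) (abs_cos_le_one η)).trans_lt hc

theorem hasDerivAt_arccos_mul_cos {c : ℝ} (hc : |c| < 1) (η : ℝ) :
    HasDerivAt (fun η => arccos (c * cos η)) (c * sin η / √(1 - (c * cos η) ^ 2)) η := by
  have hx := abs_mul_cos_lt_one hc η
  have h := (hasDerivAt_arccos (abs_lt.mp hx).1.ne' (abs_lt.mp hx).2.ne).comp η
    ((hasDerivAt_cos η).const_mul c)
  exact h.congr_deriv (by ring)

noncomputable def fiberMoment (k : ℕ) (θ : ℝ) : ℝ :=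
  ∫ η in (0 : ℝ)..(π / 2), arccos (cos θ * cos η) ^ k * cos η * sin η

theorem continuous_fiberMoment (k : ℕ) : Continuous (fiberMoment k) :=
  continuous_parametric_intervalIntegral_of_continuous' (by fun_prop) _ _

theorem fiberMoment_even (k : ℕ) : Function.Even (fiberMoment k) := by
  intro θ
  simp [fiberMoment]

theorem momentI_two_eq_integral_fiberMoment (k : ℕ) :
    momentI 2 k = 4 / π * ∫ θ in 0..π / 2, fiberMoment k θ := by
  have h := integral_neg_eq_two_mul_integral_of_even (fiberMoment_even k)
    (continuous_fiberMoment k) (π / 2)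
  rw [momentI, Nat.cast_ofNat, intervalIntegral.integral_const, smul_eq_mul]
  change _ * ((_ - _) * ∫ θ in -(π / 2)..π / 2, fiberMoment k θ) = _
  rw [h]
  field_simp
  ring

theorem cos_sq_mul_fiberMoment {θ : ℝ} (hθ : θ ∈ Ioo 0 π) (k : ℕ) :
    cos θ ^ 2 * fiberMoment k θ = ∫ r in θ..π / 2, r ^ k * sin r * cos r := by
  have hc := abs_cos_lt_one_of_mem_Ioo hθ
  have hsqrt (η : ℝ) : 0 < √(1 - (cos θ * cos η) ^ 2) :=
    sqrt_pos.mpr (sub_pos.mpr ((sq_lt_one_iff_abs_lt_one _).mpr (abs_mul_cos_lt_one hc η)))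
  have hsubst := integral_comp_mul_deriv (a := 0) (b := π / 2)
    (g := fun r => r ^ k * sin r * cos r)
    (fun η _ => hasDerivAt_arccos_mul_cos hc η)
    (Continuous.continuousOn (Continuous.div (by fun_prop) (by fun_prop) fun η => (hsqrt η).ne'))
    (by fun_prop)
  rw [cos_zero, mul_one, arccos_cos hθ.1.le hθ.2.le, cos_pi_div_two, mul_zero, arccos_zero]
    at hsubst
  rw [← hsubst, fiberMoment, ← intervalIntegral.integral_const_mul]
  refine integral_congr fun η _ => ?_
  simp only [Function.comp_apply, sin_arccos]
  have hx := abs_lt.mp (abs_mul_cos_lt_one hc η)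
  have hs := (hsqrt η).ne'
  rw [cos_arccos hx.1.le hx.2.le]
  generalize √(1 - (cos θ * cos η) ^ 2) = s at hs ⊢
  field_simp

theorem hasDerivAt_sin_mul_cos_mul_fiberMoment {θ : ℝ} (hθ : θ ∈ Ioo 0 (π / 2)) (k : ℕ) :
    HasDerivAt (fun t => sin t * cos t * fiberMoment k t)
      (fiberMoment k θ - θ ^ k * sin θ ^ 2) θ := by
  have hg : Continuous fun r : ℝ => r ^ k * sin r * cos r := by fun_prop
  have hG := integral_hasDerivAt_left (hg.intervalIntegrable θ (π / 2))
    (hg.stronglyMeasurableAtFilter _ _) hg.continuousAt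
  have hcos : ∀ t ∈ Ioo 0 (π / 2), cos t ≠ 0 := fun t ht =>
    (cos_pos_of_mem_Ioo ⟨by linarith [ht.1, pi_pos], ht.2⟩).ne'
  have hsub : ∀ t ∈ Ioo 0 (π / 2), t ∈ Ioo 0 π := fun t ht =>
    ⟨ht.1, ht.2.trans (by linarith [pi_pos])⟩
  have hEq : (fun t => sin t * cos t * fiberMoment k t) =ᶠ[nhds θ]
      fun t => tan t * ∫ r in t..π / 2, r ^ k * sin r * cos r := by
    filter_upwards [Ioo_mem_nhds hθ.1 hθ.2] with t ht
    rw [← cos_sq_mul_fiberMoment (hsub t ht), tan_eq_sin_div_cos]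
    field_simp [hcos t ht]
  refine (((hasDerivAt_tan (hcos θ hθ)).mul hG).congr_of_eventuallyEq hEq).congr_deriv ?_
  rw [← cos_sq_mul_fiberMoment (hsub θ hθ), tan_eq_sin_div_cos]
  field_simp [hcos θ hθ]
  ring

theorem integral_fiberMoment (k : ℕ) :
    ∫ θ in 0..π / 2, fiberMoment k θ = ∫ r in 0..π / 2, r ^ k * sin r ^ 2 := by
  have hF := continuous_fiberMoment k
  have hftc := integral_eq_sub_of_hasDerivAt_of_le (by positivity)
    (by fun_prop : Continuous fun t => sin t * cos t * fiberMoment k t).continuousOn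
    (fun θ hθ => hasDerivAt_sin_mul_cos_mul_fiberMoment hθ k)
    (Continuous.intervalIntegrable (by fun_prop) _ _)
  rw [integral_sub (hF.intervalIntegrable _ _) (Continuous.intervalIntegrable (by fun_prop) _ _),
    cos_pi_div_two, sin_zero] at hftc
  linarith

theorem momentI_two_eq_integral_pow_mul_sin_sq (k : ℕ) :
    momentI 2 k = 4 / π * ∫ r in 0..π / 2, r ^ k * sin r ^ 2 := by
  rw [momentI_two_eq_integral_fiberMoment, integral_fiberMoment]

theorem hasDerivAt_antideriv_pow_mul_sin_sq (m : ℕ) (r : ℝ) :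
    HasDerivAt
      (fun r => r ^ (m + 3) / (2 * (m + 3)) - r ^ (m + 2) * sin r * cos r / 2
        + (m + 2) / 4 * r ^ (m + 1) * sin r ^ 2)
      ((r ^ (m + 2) + (m + 2) * (m + 1) / 4 * r ^ m) * sin r ^ 2) r := by
  have h3 := hasDerivAt_pow (m + 3) r
  have h2 := hasDerivAt_pow (m + 2) r
  have h1 := hasDerivAt_pow (m + 1) r
  have hs := hasDerivAt_sin r
  have hc := hasDerivAt_cos r
  refine (((h3.div_const _).sub (((h2.mul hs).mul hc).div_const 2)).add
    (((h1.const_mul _).mul (hs.pow 2)))).congr_deriv ?_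
  have hm : (m : ℝ) + 3 ≠ 0 := by positivity
  simp only [Nat.cast_add, Nat.cast_ofNat, Nat.add_one_sub_one, Pi.mul_apply, mul_neg,
    Nat.cast_one, add_tsub_cancel_right, Pi.pow_apply, pow_one]
  field_simp
  linear_combination -4 * r ^ (m + 2) * sin_sq_add_cos_sq r

theorem integral_pow_mul_sin_sq_recurrence (m : ℕ) :
    (∫ r in 0..π / 2, r ^ (m + 2) * sin r ^ 2)
      + (m + 2) * (m + 1) / 4 * ∫ r in 0..π / 2, r ^ m * sin r ^ 2
      = (π / 2) ^ (m + 3) / (2 * (m + 3)) + (m + 2) / 4 * (π / 2) ^ (m + 1) := by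
  have hint (j : ℕ) : IntervalIntegrable (fun r => r ^ j * sin r ^ 2) volume 0 (π / 2) :=
    Continuous.intervalIntegrable (by fun_prop) _ _
  rw [← intervalIntegral.integral_const_mul, ← integral_add (hint _) ((hint m).const_mul _),
    integral_eq_sub_of_hasDerivAt
      (fun r _ => (hasDerivAt_antideriv_pow_mul_sin_sq m r).congr_deriv (by ring))
      (Continuous.intervalIntegrable (by fun_prop) _ _)]
  simp

theorem moment_recurrence_RP3 (k : ℕ) (hk : 2 ≤ k) :
    momentI 2 k =
      -((k : ℝ) * ((k : ℝ) - 1) / 4) * momentI 2 (k - 2)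
        + (1 / ((k : ℝ) + 1)) * (Real.pi / 2) ^ k
        + ((k : ℝ) / Real.pi) * (Real.pi / 2) ^ (k - 1) := by
  obtain ⟨m, rfl⟩ := Nat.exists_eq_add_of_le' hk
  rw [momentI_two_eq_integral_pow_mul_sin_sq, momentI_two_eq_integral_pow_mul_sin_sq,
    eq_sub_of_add_eq (integral_pow_mul_sin_sq_recurrence m), Nat.add_sub_cancel,
    Nat.add_sub_assoc one_le_two]
  push_cast
  field_simp
  ring
end

section
/- For every integer k ≥ 0, the k-th moment of distance on L(2;1) = ℝP³ is I(2,k) = (1/(k+1)) · (π/2)^k · [ 2 · ₁F₂(1; (k+3)/2, (k+4)/2; −π²/4) + (π²/((k+2)(k+3))) · ( ₁F₂(1; (k+4)/2, (k+5)/2; −π²/4) − (4/(k+4)) · ₁F₂(2; (k+5)/2, (k+6)/2; −π²/4) ) ]. -/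
open MeasureTheory

/-- The ascending Pochhammer symbol `(b)_j = b (b+1) ⋯ (b+j-1)`. -/
noncomputable def asc (b : ℝ) (j : ℕ) : ℝ := ∏ i ∈ Finset.range j, (b + i)

/-- The generalized hypergeometric function `₁F₂(1; b₁, b₂; z)`. -/
noncomputable def oneFtwo (b₁ b₂ z : ℝ) : ℝ := ∑' j : ℕ, z ^ j / (asc b₁ j * asc b₂ j)

/-- The generalized hypergeometric function `₁F₂(2; b₁, b₂; z)`. -/
noncomputable def twoFtwo (b₁ b₂ z : ℝ) : ℝ :=
  ∑' j : ℕ, ((j : ℝ) + 1) * z ^ j / (asc b₁ j * asc b₂ j)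

/-!
The `θ₂`-integral is trivial, and `θ₁ ↦ -θ₁` halves the `θ₁`-range. For fixed `θ = θ₁` the
substitution `φ = arccos (cos θ cos η)` turns the `η`-integral into
`cos⁻² θ · ∫_θ^{π/2} φ^k sin φ cos φ dφ`, and integrating by parts against `tan θ` gives
`∫_0^{π/2} θ^k sin² θ dθ`. One more integration by parts and `t = 2θ` reduce this to
`w_{k+1}`, where `w_m = ∫_0^π t^m sin t dt` satisfies `w_{m+2} + (m+1)(m+2) w_m = π^{m+2}`.
Telescoping this recurrence (with `|w_m| ≤ π^{m+1}` controlling the remainder) expands `w_m / m!`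
in the factorial series `∑ π^{m+2} (-π²)^j / (m+2+2j)!`. By the duplication formula
`(b)_j (b+½)_j 4^j = (2b)_{2j}` such series are `₁F₂`'s with half-integer parameters, and a
contiguous relation rewrites the resulting closed form `(π/2)^k/(k+1) · (2 - π²/((k+2)(k+3)) ·
₁F₂(1; (k+4)/2, (k+5)/2; -π²/4))` in the shape of the theorem.
-/

open Real Set intervalIntegral Filter Topology
open scoped Nat

lemma asc_succ (b : ℝ) (j : ℕ) : asc b (j + 1) = asc b j * (b + j) :=
  Finset.prod_range_succ _ _

lemma asc_mul_asc_add_half (b : ℝ) (j : ℕ) :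
    asc b j * asc (b + 1 / 2) j * 4 ^ j = asc (2 * b) (2 * j) := by
  induction j with
  | zero => simp [asc]
  | succ j ih =>
    rw [show 2 * (j + 1) = 2 * j + 1 + 1 by ring, asc_succ, asc_succ, asc_succ, asc_succ, pow_succ]
    push_cast
    linear_combination (4 * (b + j) * (b + 1 / 2 + j)) * ih

lemma asc_natCast_add_one_mul_factorial (n j : ℕ) : asc (n + 1) j * n ! = (n + j)! := by
  induction j with
  | zero => simp [asc]
  | succ j ih =>
    rw [asc_succ, ← add_assoc, Nat.factorial_succ]
    push_cast
    linear_combination (n + 1 + j : ℝ) * ih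

lemma asc_mul_asc_half_natCast (n j : ℕ) :
    asc ((n + 2) / 2) j * asc ((n + 3) / 2) j = (n + 1 + 2 * j)! / (4 ^ j * (n + 1)!) := by
  rw [eq_div_iff (by positivity), show ((n : ℝ) + 3) / 2 = (n + 2) / 2 + 1 / 2 by ring, ← mul_assoc,
    asc_mul_asc_add_half, show 2 * (((n : ℝ) + 2) / 2) = ((n + 1 : ℕ) : ℝ) + 1 by push_cast; ring,
    asc_natCast_add_one_mul_factorial]

noncomputable def powDivFactorialSeries (m : ℕ) (x : ℝ) : ℝ := ∑' j : ℕ, x ^ j / (m + 2 * j)!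

lemma summable_pow_div_factorial_add_two_mul (m : ℕ) (x : ℝ) :
    Summable fun j : ℕ => x ^ j / (m + 2 * j)! := by
  refine (Real.summable_pow_div_factorial |x|).of_norm_bounded fun j => ?_
  rw [norm_div, norm_pow, Real.norm_eq_abs, Real.norm_natCast]
  exact div_le_div_of_nonneg_left (by positivity) (by positivity)
    (by exact_mod_cast Nat.factorial_le (by omega))

lemma powDivFactorialSeries_eq_one_div_factorial_add (m : ℕ) (x : ℝ) :
    powDivFactorialSeries m x = 1 / m ! + x * powDivFactorialSeries (m + 2) x := by
  rw [powDivFactorialSeries, (summable_pow_div_factorial_add_two_mul m x).tsum_eq_zero_add,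
    powDivFactorialSeries, ← tsum_mul_left]
  congr 1
  refine tsum_congr fun j => ?_
  rw [show m + 2 * (j + 1) = m + 2 + 2 * j by ring, pow_succ]
  ring

lemma two_mul_tsum_succ_mul_pow_div_factorial (m : ℕ) (x : ℝ) :
    2 * ∑' j : ℕ, ((j : ℝ) + 1) * x ^ j / (m + 2 + 2 * j)! =
      powDivFactorialSeries (m + 1) x - m * powDivFactorialSeries (m + 2) x := by
  rw [powDivFactorialSeries, powDivFactorialSeries, ← tsum_mul_left, ← tsum_mul_left,
    ← (summable_pow_div_factorial_add_two_mul _ x).tsum_sub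
      ((summable_pow_div_factorial_add_two_mul _ x).mul_left _)]
  refine tsum_congr fun j => ?_
  rw [show m + 2 + 2 * j = m + 1 + 2 * j + 1 by ring, Nat.factorial_succ]
  push_cast
  field_simp
  ring

lemma oneFtwo_half_natCast (n : ℕ) (z : ℝ) :
    oneFtwo ((n + 2) / 2) ((n + 3) / 2) z = (n + 1)! * powDivFactorialSeries (n + 1) (4 * z) := by
  rw [oneFtwo, powDivFactorialSeries, ← tsum_mul_left]
  refine tsum_congr fun j => ?_
  rw [asc_mul_asc_half_natCast, mul_pow]
  field_simp

lemma twoFtwo_half_natCast (n : ℕ) (z : ℝ) :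
    twoFtwo ((n + 2) / 2) ((n + 3) / 2) z =
      (n + 1)! * ∑' j : ℕ, ((j : ℝ) + 1) * (4 * z) ^ j / (n + 1 + 2 * j)! := by
  rw [twoFtwo, ← tsum_mul_left]
  refine tsum_congr fun j => ?_
  rw [asc_mul_asc_half_natCast, mul_pow]
  field_simp

theorem oneFtwo_contiguous (n : ℕ) (z : ℝ) :
    oneFtwo ((n + 3) / 2) ((n + 4) / 2) z =
      1 + 4 * z / ((n + 2) * (n + 3)) *
        (oneFtwo ((n + 4) / 2) ((n + 5) / 2) z -
          2 / (n + 4) * twoFtwo ((n + 5) / 2) ((n + 6) / 2) z) := by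
  have h₁ := oneFtwo_half_natCast (n + 1) z
  have h₂ := oneFtwo_half_natCast (n + 2) z
  have h₃ := twoFtwo_half_natCast (n + 3) z
  have hG := two_mul_tsum_succ_mul_pow_div_factorial (n + 2) (4 * z)
  have hS := powDivFactorialSeries_eq_one_div_factorial_add (n + 2) (4 * z)
  push_cast at h₁ h₂ h₃ hG
  rw [show (n : ℝ) + 1 + 2 = n + 3 by ring, show (n : ℝ) + 1 + 3 = n + 4 by ring] at h₁
  rw [show (n : ℝ) + 2 + 2 = n + 4 by ring, show (n : ℝ) + 2 + 3 = n + 5 by ring] at h₂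
  rw [show (n : ℝ) + 3 + 2 = n + 5 by ring, show (n : ℝ) + 3 + 3 = n + 6 by ring,
    show n + 3 + 1 = n + 2 + 2 by ring] at h₃
  rw [h₁, h₂, h₃, eq_div_of_mul_eq two_ne_zero ((mul_comm _ _).trans hG), hS]
  simp only [Nat.factorial_succ, show n + 2 = n + 1 + 1 from rfl]
  push_cast
  field_simp
  ring

noncomputable def sinMoment (m : ℕ) : ℝ := ∫ t in (0 : ℝ)..π, t ^ m * sin t

lemma sinMoment_add_two (m : ℕ) :
    sinMoment (m + 2) + (m + 1) * (m + 2) * sinMoment m = π ^ (m + 2) := by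
  have hderiv : ∀ t ∈ uIcc 0 π,
      HasDerivAt (fun t => (m + 2) * t ^ (m + 1) * sin t - t ^ (m + 2) * cos t)
        (t ^ (m + 2) * sin t + (m + 1) * (m + 2) * (t ^ m * sin t)) t := by
    intro t _
    refine ((((hasDerivAt_pow (m + 1) t).const_mul ((m : ℝ) + 2)).fun_mul
      (hasDerivAt_sin t)).fun_sub
        ((hasDerivAt_pow (m + 2) t).fun_mul (hasDerivAt_cos t))).congr_deriv ?_
    rw [Nat.add_sub_cancel, show m + 2 - 1 = m + 1 by omega]
    push_cast
    ring
  have hftc :=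
    integral_eq_sub_of_hasDerivAt hderiv (Continuous.intervalIntegrable (by fun_prop) _ _)
  rw [integral_add (Continuous.intervalIntegrable (by fun_prop) _ _)
    (Continuous.intervalIntegrable (by fun_prop) _ _), intervalIntegral.integral_const_mul] at hftc
  simpa [sinMoment] using hftc

lemma abs_sinMoment_le (m : ℕ) : |sinMoment m| ≤ π ^ (m + 1) := by
  have hbound : ∀ t ∈ uIoc 0 π, ‖t ^ m * sin t‖ ≤ π ^ m := by
    intro t ht
    rw [uIoc_of_le pi_pos.le] at ht
    rw [norm_mul, norm_pow, Real.norm_of_nonneg ht.1.le]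
    calc t ^ m * ‖sin t‖ ≤ π ^ m * 1 :=
          mul_le_mul (pow_le_pow_left₀ ht.1.le ht.2 m) (abs_sin_le_one t) (norm_nonneg _)
            (by positivity)
      _ = π ^ m := mul_one _
  have h := norm_integral_le_of_norm_le_const hbound
  rwa [sub_zero, abs_of_pos pi_pos, ← pow_succ] at h

lemma sinMoment_div_factorial (m : ℕ) :
    sinMoment m / m ! = π ^ (m + 2) / (m + 2)! - sinMoment (m + 2) / (m + 2)! := by
  rw [Nat.factorial_succ, Nat.factorial_succ]
  push_cast
  field_simp
  linear_combination sinMoment_add_two m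

lemma sum_range_add_sinMoment_div_factorial (m N : ℕ) :
    ∑ j ∈ Finset.range N, π ^ (m + 2) * (-π ^ 2) ^ j / (m + 2 + 2 * j)! +
      (-1) ^ N * (sinMoment (m + 2 * N) / (m + 2 * N)!) = sinMoment m / m ! := by
  induction N with
  | zero => simp
  | succ N ih =>
    rw [Finset.sum_range_succ, ← ih, sinMoment_div_factorial (m + 2 * N),
      show m + 2 * (N + 1) = m + 2 * N + 2 by ring, show m + 2 + 2 * N = m + 2 * N + 2 by ring,
      neg_pow, ← pow_mul, show π ^ (m + 2 * N + 2) = π ^ (m + 2) * π ^ (2 * N) by ring]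
    ring

lemma tendsto_sinMoment_div_factorial : Tendsto (fun n => sinMoment n / n !) atTop (𝓝 0) := by
  have h := (FloorSemiring.tendsto_pow_div_factorial_atTop π).const_mul π
  rw [mul_zero] at h
  refine squeeze_zero_norm (fun n => ?_) h
  rw [norm_div, Real.norm_natCast, Real.norm_eq_abs, mul_div_assoc', ← pow_succ']
  gcongr
  exact abs_sinMoment_le n

theorem hasSum_sinMoment_div_factorial (m : ℕ) :
    HasSum (fun j : ℕ => π ^ (m + 2) * (-π ^ 2) ^ j / (m + 2 + 2 * j)!) (sinMoment m / m !) := by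
  have hsum : Summable fun j : ℕ => π ^ (m + 2) * (-π ^ 2) ^ j / (m + 2 + 2 * j)! := by
    simpa only [mul_div_assoc] using
      (summable_pow_div_factorial_add_two_mul (m + 2) (-π ^ 2)).mul_left (π ^ (m + 2))
  have hrem : Tendsto (fun N : ℕ => (-1) ^ N * (sinMoment (m + 2 * N) / (m + 2 * N)!)) atTop
      (𝓝 0) := by
    have hidx : Tendsto (fun N : ℕ => m + 2 * N) atTop atTop :=
      tendsto_atTop_mono (fun N => (by omega : N ≤ m + 2 * N)) tendsto_id
    rw [tendsto_zero_iff_norm_tendsto_zero]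
    simpa [norm_mul, norm_pow] using
      (tendsto_zero_iff_norm_tendsto_zero.mp (tendsto_sinMoment_div_factorial.comp hidx))
  rw [hsum.hasSum_iff_tendsto_nat,
    tendsto_congr fun N => eq_sub_of_add_eq (sum_range_add_sinMoment_div_factorial m N)]
  simpa using (tendsto_const_nhds (x := sinMoment m / m !)).sub hrem

theorem sinMoment_eq_oneFtwo (m : ℕ) :
    sinMoment m =
      π ^ (m + 2) / ((m + 1) * (m + 2)) * oneFtwo ((m + 3) / 2) ((m + 4) / 2) (-(π ^ 2 / 4)) := by
  have h := oneFtwo_half_natCast (m + 1) (-(π ^ 2 / 4))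
  push_cast at h
  rw [show (m : ℝ) + 1 + 2 = m + 3 by ring, show (m : ℝ) + 1 + 3 = m + 4 by ring,
    show 4 * -(π ^ 2 / 4) = -π ^ 2 by ring] at h
  have hs := (hasSum_sinMoment_div_factorial m).tsum_eq
  simp only [mul_div_assoc, tsum_mul_left] at hs
  rw [h, show m + 1 + 1 = m + 2 from rfl, powDivFactorialSeries,
    (div_eq_iff (by positivity)).mp hs.symm, Nat.factorial_succ (m + 1), Nat.factorial_succ m]
  push_cast
  field_simp
  ring

lemma integral_comp_arccos_mul_cos {h : ℝ → ℝ} (hh : Continuous h) {c : ℝ} (hc : |c| < 1) :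
    c ^ 2 * ∫ η in (0 : ℝ)..π / 2, h (arccos (c * cos η)) * cos η * sin η =
      ∫ t in arccos c..π / 2, h t * sin t * cos t := by
  have hlt : ∀ η, |c * cos η| < 1 := fun η => by
    rw [abs_mul]
    nlinarith [abs_nonneg c, abs_cos_le_one η, abs_nonneg (cos η)]
  have hsqrt : ∀ η, 0 < √(1 - (c * cos η) ^ 2) := fun η => by
    rw [Real.sqrt_pos, sub_pos, sq_lt_one_iff_abs_lt_one]
    exact hlt η
  set f' : ℝ → ℝ := fun η => c * sin η / √(1 - (c * cos η) ^ 2)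
  have hderiv : ∀ η ∈ uIcc 0 (π / 2), HasDerivAt (fun η => arccos (c * cos η)) (f' η) η := by
    intro η _
    obtain ⟨hlo, hhi⟩ := abs_lt.mp (hlt η)
    refine ((hasDerivAt_arccos hlo.ne' hhi.ne).comp η
      ((hasDerivAt_cos η).const_mul c)).congr_deriv ?_
    simp only [f']
    field_simp
  have hf' : Continuous f' := by
    simp only [f']
    exact Continuous.div (by fun_prop) (by fun_prop) fun η => (hsqrt η).ne'
  have hsubst := integral_comp_mul_deriv hderiv hf'.continuousOn
    (show Continuous fun t => h t * sin t * cos t by fun_prop)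
  rw [cos_zero, mul_one, cos_pi_div_two, mul_zero, arccos_zero] at hsubst
  rw [← hsubst, ← intervalIntegral.integral_const_mul]
  refine integral_congr fun η _ => ?_
  obtain ⟨hlo, hhi⟩ := abs_lt.mp (hlt η)
  have hs := (hsqrt η).ne'
  simp only [Function.comp, f', sin_arccos, cos_arccos hlo.le hhi.le]
  generalize √(1 - (c * cos η) ^ 2) = s at hs ⊢
  field_simp

noncomputable def innerIntegral (h : ℝ → ℝ) (θ : ℝ) : ℝ :=
  ∫ η in (0 : ℝ)..π / 2, h (arccos (cos θ * cos η)) * cos η * sin η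

lemma continuous_innerIntegral {h : ℝ → ℝ} (hh : Continuous h) : Continuous (innerIntegral h) :=
  continuous_parametric_intervalIntegral_of_continuous' (by fun_prop) _ _

lemma cos_sq_mul_innerIntegral {h : ℝ → ℝ} (hh : Continuous h) {θ : ℝ} (hθ : θ ∈ Ioo 0 π) :
    cos θ ^ 2 * innerIntegral h θ = ∫ t in θ..π / 2, h t * sin t * cos t := by
  have hcos : |cos θ| < 1 := by
    rw [← sq_lt_one_iff_abs_lt_one, cos_sq']
    nlinarith [sin_pos_of_pos_of_lt_pi hθ.1 hθ.2]
  rw [innerIntegral, integral_comp_arccos_mul_cos hh hcos, arccos_cos hθ.1.le hθ.2.le]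

theorem integral_innerIntegral {h : ℝ → ℝ} (hh : Continuous h) :
    ∫ θ in (0 : ℝ)..π / 2, innerIntegral h θ = ∫ θ in (0 : ℝ)..π / 2, h θ * sin θ ^ 2 := by
  -- `sin θ cos θ · innerIntegral h θ = tan θ · F θ` on `(0, π/2)`, and the left side is
  -- continuous on `[0, π/2]`, so no limit at the singularity of `tan` is needed.
  set F : ℝ → ℝ := fun θ => ∫ t in θ..π / 2, h t * sin t * cos t
  have hF : ∀ θ ∈ Ioo 0 π, cos θ ^ 2 * innerIntegral h θ = F θ :=
    fun θ hθ => cos_sq_mul_innerIntegral hh hθ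
  have hderiv : ∀ θ ∈ Ioo 0 (π / 2), HasDerivAt (fun θ => sin θ * cos θ * innerIntegral h θ)
      (innerIntegral h θ - h θ * sin θ ^ 2) θ := by
    intro θ hθ
    have hcos : cos θ ≠ 0 := (cos_pos_of_mem_Ioo ⟨by linarith [hθ.1, pi_pos], hθ.2⟩).ne'
    have hFderiv : HasDerivAt F (-(h θ * sin θ * cos θ)) θ :=
      integral_hasDerivAt_left (Continuous.intervalIntegrable (by fun_prop) _ _)
        (Continuous.stronglyMeasurableAtFilter (by fun_prop) _ _) (by fun_prop)
    have heq : (fun θ => tan θ * F θ) =ᶠ[𝓝 θ] fun θ => sin θ * cos θ * innerIntegral h θ := by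
      filter_upwards [Ioo_mem_nhds hθ.1 hθ.2] with y hy
      have hcosy : cos y ≠ 0 := (cos_pos_of_mem_Ioo ⟨by linarith [hy.1, pi_pos], hy.2⟩).ne'
      rw [← hF y ⟨hy.1, by linarith [hy.2, pi_pos]⟩, tan_eq_sin_div_cos]
      field_simp
    refine (((hasDerivAt_tan hcos).mul hFderiv).congr_of_eventuallyEq heq.symm).congr_deriv ?_
    rw [← hF θ ⟨hθ.1, by linarith [hθ.2, pi_pos]⟩, tan_eq_sin_div_cos]
    field_simp
    ring
  have hftc := integral_eq_sub_of_hasDerivAt_of_le (by positivity)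
    ((continuous_sin.mul continuous_cos).mul (continuous_innerIntegral hh)).continuousOn hderiv
    (((continuous_innerIntegral hh).sub (by fun_prop)).intervalIntegrable _ _)
  rw [integral_sub ((continuous_innerIntegral hh).intervalIntegrable _ _)
    (Continuous.intervalIntegrable (by fun_prop) _ _)] at hftc
  simp only [Pi.mul_apply, cos_pi_div_two, sin_zero, mul_zero, zero_mul, sub_zero] at hftc
  linarith

lemma integral_symmetric_of_even {f : ℝ → ℝ} (hf : Continuous f) (heven : ∀ x, f (-x) = f x)
    (a : ℝ) : ∫ x in -a..a, f x = 2 * ∫ x in (0 : ℝ)..a, f x := by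
  have hneg := integral_comp_neg (a := 0) (b := a) f
  rw [neg_zero] at hneg
  simp only [heven] at hneg
  rw [← integral_add_adjacent_intervals (hf.intervalIntegrable (-a) 0) (hf.intervalIntegrable 0 a),
    ← hneg]
  ring

lemma momentI_eq (n k : ℕ) :
    momentI n k = 2 * n / π * ∫ θ in (0 : ℝ)..π / n, innerIntegral (· ^ k) θ := by
  have hsymm := integral_symmetric_of_even (continuous_innerIntegral (continuous_pow k))
    (fun θ => by simp only [innerIntegral, cos_neg]) (π / n)
  have hinner : ∀ θ, (∫ η in (0 : ℝ)..π / 2, arccos (cos θ * cos η) ^ k * cos η * sin η) =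
      innerIntegral (· ^ k) θ := fun θ => rfl
  simp only [momentI, hinner, hsymm, intervalIntegral.integral_const, smul_eq_mul]
  rcases eq_or_ne n 0 with rfl | hn
  · simp
  field_simp
  ring

lemma integral_pow_mul_sin_two_mul (m : ℕ) :
    ∫ θ in (0 : ℝ)..π / 2, θ ^ m * sin (2 * θ) = sinMoment m / 2 ^ (m + 1) := by
  have h := integral_comp_mul_left (fun t => t ^ m * sin t) (two_ne_zero' ℝ) (a := 0) (b := π / 2)
  simp only [mul_zero, mul_div_cancel₀ π (two_ne_zero' ℝ), mul_pow, mul_assoc, smul_eq_mul,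
    intervalIntegral.integral_const_mul] at h
  rw [sinMoment, pow_succ]
  field_simp
  linarith

lemma integral_pow_mul_sin_sq (k : ℕ) :
    (k + 1) * ∫ θ in (0 : ℝ)..π / 2, θ ^ k * sin θ ^ 2 =
      (π / 2) ^ (k + 1) - sinMoment (k + 1) / 2 ^ (k + 2) := by
  have hderiv : ∀ θ ∈ uIcc 0 (π / 2), HasDerivAt (fun θ => θ ^ (k + 1) * sin θ ^ 2)
      ((k + 1) * (θ ^ k * sin θ ^ 2) + θ ^ (k + 1) * sin (2 * θ)) θ := by
    intro θ _
    refine ((hasDerivAt_pow (k + 1) θ).fun_mul ((hasDerivAt_sin θ).fun_pow 2)).congr_deriv ?_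
    rw [Nat.add_sub_cancel, sin_two_mul]
    push_cast
    ring
  have hftc :=
    integral_eq_sub_of_hasDerivAt hderiv (Continuous.intervalIntegrable (by fun_prop) _ _)
  rw [integral_add (Continuous.intervalIntegrable (by fun_prop) _ _)
    (Continuous.intervalIntegrable (by fun_prop) _ _), intervalIntegral.integral_const_mul,
    integral_pow_mul_sin_two_mul] at hftc
  simp only [sin_pi_div_two, sin_zero] at hftc
  rw [pow_succ 2 (k + 1)]
  linear_combination hftc

theorem moment_formula_RP3 (k : ℕ) :
    momentI 2 k =
      (1 / ((k : ℝ) + 1)) * (Real.pi / 2) ^ k *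
        ( 2 * oneFtwo (((k : ℝ) + 3) / 2) (((k : ℝ) + 4) / 2) (-(Real.pi ^ 2 / 4))
          + (Real.pi ^ 2 / (((k : ℝ) + 2) * ((k : ℝ) + 3))) *
              ( oneFtwo (((k : ℝ) + 4) / 2) (((k : ℝ) + 5) / 2) (-(Real.pi ^ 2 / 4))
                - (4 / ((k : ℝ) + 4)) *
                    twoFtwo (((k : ℝ) + 5) / 2) (((k : ℝ) + 6) / 2) (-(Real.pi ^ 2 / 4)) ) ) := by
  have hmoment : momentI 2 k = 4 / π * ∫ θ in (0 : ℝ)..π / 2, θ ^ k * sin θ ^ 2 := by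
    rw [momentI_eq]
    push_cast
    rw [integral_innerIntegral (continuous_pow k)]
    norm_num
  have hintegral : ∫ θ in (0 : ℝ)..π / 2, θ ^ k * sin θ ^ 2 =
      ((π / 2) ^ (k + 1) - sinMoment (k + 1) / 2 ^ (k + 2)) / (k + 1) := by
    rw [← integral_pow_mul_sin_sq, mul_div_cancel_left₀ _ (by positivity)]
  have hsin := sinMoment_eq_oneFtwo (k + 1)
  push_cast at hsin
  rw [show (k : ℝ) + 1 + 1 = k + 2 by ring, show (k : ℝ) + 1 + 2 = k + 3 by ring,
    show (k : ℝ) + 1 + 3 = k + 4 by ring, show (k : ℝ) + 1 + 4 = k + 5 by ring] at hsin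
  rw [hmoment, hintegral, hsin, oneFtwo_contiguous k, div_pow, div_pow]
  field_simp
  ring
end

section
/- For every fixed integer k ≥ 0, the limit of the k-th moment of distance as n → ∞ is lim_{n→∞} I(n,k) = (π/((k+2)(k+1))) · (π/2)^{k+1} · ₁F₂(1; (k+3)/2, (k+4)/2; −π²/4). -/
open MeasureTheory

/-!
The integrand of `momentI` does not depend on `θ₂`, and the normalisation `n² / (2π²)` times the
length `2π / n` of the `θ₂`-range is `1 / t` with `t = π / n`. Hence `momentI n k` is
`t⁻¹ ∫_{-t}^{t} F` for the continuous function
`F θ = ∫₀^{π/2} arccos (cos θ cos η)^k cos η sin η dη`, and it tends to `2 F 0 = ∫₀^{π/2} η^k sin 2η dη = 2^{-(k+1)} ∫₀^π y^k sin y dy`.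

Two integrations by parts give `K (k+2) = π^(k+2) - (k+2)(k+1) K k` for `K k = ∫₀^π y^k sin y dy`.
The same recurrence holds for `k! T (k+2)`, where `T m = ∑ⱼ (-1)^j π^(m+2j) / (m+2j)!` is the tail
of the sine or cosine series at `π`, and the initial values agree because `cos π = -1` and
`sin π = 0`. Finally `((m+1)/2)_j ((m+2)/2)_j 4^j = (m+2j)! / m!` rewrites `T m` as the `₁F₂`
series.
-/

open Real Filter Topology Nat

noncomputable def trigTail (x : ℝ) (m : ℕ) : ℝ :=
  ∑' j : ℕ, (-1) ^ j * x ^ (m + 2 * j) / (m + 2 * j)!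

theorem summable_trigTail (x : ℝ) (m : ℕ) :
    Summable fun j : ℕ => (-1) ^ j * x ^ (m + 2 * j) / ((m + 2 * j)! : ℝ) := by
  refine Summable.of_abs <| ((Real.summable_pow_div_factorial |x|).comp_injective
    (i := fun j => m + 2 * j) fun a b h => by simp only at h; omega).congr fun j => ?_
  simp [abs_div, abs_mul, abs_pow]

theorem trigTail_eq_sub (x : ℝ) (m : ℕ) :
    trigTail x m = x ^ m / (m ! : ℝ) - trigTail x (m + 2) := by
  rw [trigTail, (summable_trigTail x m).tsum_eq_zero_add, trigTail, sub_eq_add_neg, ← tsum_neg]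
  congr 1
  · simp
  · refine tsum_congr fun j => ?_
    rw [show m + 2 * (j + 1) = m + 2 + 2 * j by ring, pow_succ]
    ring

theorem trigTail_zero (x : ℝ) : trigTail x 0 = cos x := by
  simp [trigTail, cos_eq_tsum]

theorem trigTail_one (x : ℝ) : trigTail x 1 = sin x := by
  simp [trigTail, sin_eq_tsum, add_comm 1]

theorem trigTail_two (x : ℝ) : trigTail x 2 = 1 - cos x := by
  simp [trigTail_eq_sub x 0, ← trigTail_zero x]

theorem trigTail_three (x : ℝ) : trigTail x 3 = x - sin x := by
  simp [trigTail_eq_sub x 1, ← trigTail_one x]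

section PowMulTrig

variable (a : ℝ) (k : ℕ)

theorem integral_pow_succ_mul_cos :
    ∫ y in (0 : ℝ)..a, y ^ (k + 1) * cos y
      = a ^ (k + 1) * sin a - (k + 1) * ∫ y in (0 : ℝ)..a, y ^ k * sin y := by
  rw [intervalIntegral.integral_mul_deriv_eq_deriv_mul (fun y _ => hasDerivAt_pow (k + 1) y)
    (fun y _ => hasDerivAt_sin y) (Continuous.intervalIntegrable (by fun_prop) _ _)
    (Continuous.intervalIntegrable (by fun_prop) _ _), ← intervalIntegral.integral_const_mul]
  simp [mul_assoc, mul_left_comm]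

theorem integral_pow_succ_mul_sin :
    ∫ y in (0 : ℝ)..a, y ^ (k + 1) * sin y
      = -(a ^ (k + 1) * cos a) + (k + 1) * ∫ y in (0 : ℝ)..a, y ^ k * cos y := by
  rw [intervalIntegral.integral_mul_deriv_eq_deriv_mul (v := fun y => -cos y)
    (fun y _ => hasDerivAt_pow (k + 1) y) (fun y _ => by simpa using (hasDerivAt_cos y).fun_neg)
    (Continuous.intervalIntegrable (by fun_prop) _ _)
    (Continuous.intervalIntegrable (by fun_prop) _ _), ← intervalIntegral.integral_const_mul]
  simp [mul_assoc, mul_left_comm]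

end PowMulTrig

theorem integral_pow_mul_sin_eq_factorial_mul_trigTail (k : ℕ) :
    ∫ y in (0 : ℝ)..π, y ^ k * sin y = k ! * trigTail π (k + 2) := by
  induction k using Nat.twoStepInduction with
  | zero => simp [trigTail_two, integral_sin]
  | one => simpa [trigTail_three, integral_cos] using integral_pow_succ_mul_sin π 0
  | more k ih _ =>
    rw [integral_pow_succ_mul_sin, integral_pow_succ_mul_cos, ih, trigTail_eq_sub π (k + 2),
      factorial_succ, factorial_succ]
    simp only [sin_pi, cos_pi]
    push_cast
    field_simp
    ring

theorem asc_half_mul_asc_half_mul_four_pow (m j : ℕ) :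
    asc ((m + 1) / 2) j * asc ((m + 2) / 2) j * 4 ^ j * m ! = (m + 2 * j)! := by
  induction j with
  | zero => simp [asc]
  | succ j ih =>
    rw [show m + 2 * (j + 1) = m + 2 * j + 1 + 1 by ring, factorial_succ, factorial_succ, asc, asc,
      Finset.prod_range_succ, Finset.prod_range_succ, ← asc, ← asc]
    push_cast
    rw [← ih]
    ring

theorem pow_div_factorial_mul_oneFtwo (x : ℝ) (m : ℕ) :
    x ^ m / m ! * oneFtwo ((m + 1) / 2) ((m + 2) / 2) (-(x ^ 2 / 4)) = trigTail x m := by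
  rw [oneFtwo, ← tsum_mul_left, trigTail]
  refine tsum_congr fun j => ?_
  rw [← asc_half_mul_asc_half_mul_four_pow m j, neg_pow, div_pow, ← pow_mul, pow_add]
  have : asc ((m + 1) / 2) j * asc ((m + 2) / 2) j ≠ 0 := by
    simp only [asc, ← Finset.prod_mul_distrib]
    exact Finset.prod_ne_zero_iff.2 fun i _ => by positivity
  field_simp

theorem tendsto_integral_neg_self_div {f : ℝ → ℝ} (hf : Continuous f) :
    Tendsto (fun t => (∫ x in -t..t, f x) / t) (𝓝[>] 0) (𝓝 (2 * f 0)) := by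
  have hΦ (b : ℝ) := (hf.integral_hasStrictDerivAt 0 b).hasDerivAt
  have hderiv : HasDerivAt (fun t => (∫ x in (0 : ℝ)..t, f x) - ∫ x in (0 : ℝ)..-t, f x)
      (2 * f 0) 0 := by
    have := (hΦ 0).fun_sub ((hΦ (-0)).comp (0 : ℝ) (hasDerivAt_neg 0))
    simp only [neg_zero, Function.comp_def, mul_neg, mul_one, sub_neg_eq_add] at this
    rwa [← two_mul] at this
  refine hderiv.tendsto_slope_zero_right.congr fun t => ?_
  rw [intervalIntegral.integral_interval_sub_left (hf.intervalIntegrable _ _)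
    (hf.intervalIntegrable _ _)]
  simp [div_eq_inv_mul]

noncomputable def momentSlice (k : ℕ) (θ : ℝ) : ℝ :=
  ∫ η in (0 : ℝ)..π / 2, arccos (cos θ * cos η) ^ k * cos η * sin η

theorem continuous_momentSlice (k : ℕ) : Continuous (momentSlice k) :=
  intervalIntegral.continuous_parametric_intervalIntegral_of_continuous' (by fun_prop) _ _

theorem momentSlice_zero (k : ℕ) :
    momentSlice k 0 = (∫ y in (0 : ℝ)..π, y ^ k * sin y) / 2 ^ (k + 2) := by
  have hsub := intervalIntegral.integral_comp_mul_left (a := 0) (b := π / 2)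
    (fun y => y ^ k * sin y) two_ne_zero
  rw [show 2 * (π / 2) = π by ring, mul_zero, smul_eq_mul] at hsub
  calc momentSlice k 0 = ∫ η in (0 : ℝ)..π / 2, (2 * η) ^ k * sin (2 * η) / 2 ^ (k + 1) := by
        refine intervalIntegral.integral_congr fun η hη => ?_
        rw [Set.uIcc_of_le (by positivity)] at hη
        have : arccos (cos η) = η := arccos_cos hη.1 (hη.2.trans (by linarith [pi_pos]))
        simp only [cos_zero, one_mul, this, sin_two_mul, mul_pow]
        field_simp
        ring
    _ = _ := by
        rw [intervalIntegral.integral_div, hsub]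
        field_simp
        ring

theorem momentI_eq_integral_div {n : ℕ} (hn : 0 < n) (k : ℕ) :
    momentI n k = (∫ θ in -(π / n)..π / n, momentSlice k θ) / (π / n) := by
  simp only [momentSlice]
  rw [momentI, intervalIntegral.integral_const, smul_eq_mul]
  have : (n : ℝ) ≠ 0 := by positivity
  field_simp
  ring

theorem two_mul_momentSlice_zero (k : ℕ) :
    2 * momentSlice k 0 = π / ((k + 2) * (k + 1)) * (π / 2) ^ (k + 1) *
      oneFtwo ((k + 3) / 2) ((k + 4) / 2) (-(π ^ 2 / 4)) := by
  have h := pow_div_factorial_mul_oneFtwo π (k + 2)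
  push_cast at h
  rw [show (k : ℝ) + 2 + 1 = k + 3 by ring, show (k : ℝ) + 2 + 2 = k + 4 by ring] at h
  rw [momentSlice_zero, integral_pow_mul_sin_eq_factorial_mul_trigTail, ← h, factorial_succ,
    factorial_succ, div_pow]
  push_cast
  field_simp
  ring

theorem tendsto_pi_div_nhdsGT_zero : Tendsto (fun n : ℕ => π / n) atTop (𝓝[>] 0) :=
  tendsto_nhdsWithin_iff.2 ⟨tendsto_const_div_atTop_nhds_zero_nat π,
    eventually_gt_atTop 0 |>.mono fun n hn => by simp only [Set.mem_Ioi]; positivity⟩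

theorem moment_large_n_limit (k : ℕ) :
    Filter.Tendsto (fun n : ℕ => momentI n k) Filter.atTop
      (nhds ((Real.pi / (((k : ℝ) + 2) * ((k : ℝ) + 1))) * (Real.pi / 2) ^ (k + 1) *
        oneFtwo (((k : ℝ) + 3) / 2) (((k : ℝ) + 4) / 2) (-(Real.pi ^ 2 / 4)))) := by
  rw [← two_mul_momentSlice_zero]
  refine ((tendsto_integral_neg_self_div (continuous_momentSlice k)).comp
    tendsto_pi_div_nhdsGT_zero).congr' ?_
  filter_upwards [eventually_gt_atTop 0] with n hn
  exact (momentI_eq_integral_div hn k).symm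
end
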